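/- arXiv:2411.08456 — 5 statements merged into one kernel-verified Lean document; each statement's English description precedes it below -/
import Mathlib

section
/- Let d ≥ 2 and let F ⊆ ℝ^{d-1} be a compact convex set with (d-1)-dimensional Lebesgue measure 1. Let K ⊆ ℝ^d be a compact convex set with floor F, Vol_d(K) = 1, and K ⊆ F × [0,H] for some H ≥ 0. Then Q_K(2) = 1 − (1/d)·∫_F G_K(z)² dz, where G_K(z) = sup{ y : (z,y) ∈ K } is the top function of K on F. -/
open MeasureTheory Set

noncomputable section

/-- The floor `F ⊆ ℝ^m` embedded into `ℝ^{m+1}` at height `0`, i.e. `F × {0}`. -/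
def floorEmb (m : ℕ) (F : Set (Fin m → ℝ)) : Set (Fin (m + 1) → ℝ) :=
  (fun z => Fin.snoc z (0 : ℝ)) '' F

/-- `K ⊆ ℝ^{m+1}` has floor `F ⊆ ℝ^m`: it lies in the upper half-space and its
intersection with the hyperplane `x_{last} = 0` is `F × {0}`. -/
def HasFloor (m : ℕ) (F : Set (Fin m → ℝ)) (K : Set (Fin (m + 1) → ℝ)) : Prop :=
  K ⊆ {x | 0 ≤ x (Fin.last m)} ∧ K ∩ {x | x (Fin.last m) = 0} = floorEmb m F

/-- `Q_K(2)`: the probability that two independent uniform points `U₁, U₂` of `K`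
both lie on the boundary of the convex hull of `{U₁, U₂} ∪ (F × {0})`. -/
def Qtwo (m : ℕ) (F : Set (Fin m → ℝ)) (K : Set (Fin (m + 1) → ℝ)) : ℝ :=
  (((volume.restrict K).prod (volume.restrict K))
    {p : (Fin (m + 1) → ℝ) × (Fin (m + 1) → ℝ) |
      p.1 ∈ frontier (convexHull ℝ ({p.1, p.2} ∪ floorEmb m F)) ∧
      p.2 ∈ frontier (convexHull ℝ ({p.1, p.2} ∪ floorEmb m F))}).toReal

/-- `L_K(t)`: the `m`-dimensional Lebesgue measure of the horizontal slice of `K`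
at height `t`. -/
def layerVol (m : ℕ) (K : Set (Fin (m + 1) → ℝ)) (t : ℝ) : ℝ :=
  (volume {z : Fin m → ℝ | Fin.snoc z t ∈ K}).toReal

/-- `K ⊆ ℝ^{m+1}` is a sub-prism over `F`: it is contained in `F × [0, H]` for some `H ≥ 0`. -/
def IsSubPrism (m : ℕ) (F : Set (Fin m → ℝ)) (K : Set (Fin (m + 1) → ℝ)) : Prop :=
  ∃ H : ℝ, 0 ≤ H ∧ K ⊆ {x | Fin.init x ∈ F ∧ x (Fin.last m) ∈ Set.Icc 0 H}

/-!
`U₁, U₂` both lie on the boundary of `conv ({U₁, U₂} ∪ F × {0})` unless one of them lies in the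
interior of the cone with apex the other one over the floor `F × {0}`. The two events are disjoint
(the point inside a cone lies strictly below its apex) and equally likely by symmetry. The cone
with apex `p ∈ K` lies in `K`, and its horizontal slices are homothetic copies of `F`, so its volume
is `p_d / d`. Hence each event has probability `(1/d) ∫_K x_d dx`, and integrating along the
vertical columns `{z} × [0, G_K(z)]` of `K` gives `∫_K x_d dx = (1/2) ∫_F G_K²`.
-/

open Metric

theorem Fin.smul_snoc_add_smul_snoc {m : ℕ} {R : Type*} [Semiring R] (a b : R)
    (z z' : Fin m → R) (y y' : R) :
    a • (Fin.snoc z y : Fin (m + 1) → R) + b • Fin.snoc z' y' =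
      Fin.snoc (a • z + b • z') (a * y + b * y') := by
  ext i
  refine Fin.lastCases ?_ (fun j => ?_) i <;> simp

theorem setLIntegral_Icc_ofReal_one_sub_div_pow (m : ℕ) {h : ℝ} (hh : 0 < h) :
    ∫⁻ y in Icc 0 h, ENNReal.ofReal ((1 - y / h) ^ m) = ENNReal.ofReal (h / (m + 1)) := by
  have hnonneg : ∀ y ∈ Icc 0 h, 0 ≤ (1 - y / h) ^ m := fun y hy =>
    pow_nonneg (sub_nonneg.2 ((div_le_one hh).2 hy.2)) m
  rw [← ofReal_integral_eq_lintegral_ofReal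
    ((by fun_prop : Continuous fun y : ℝ => (1 - y / h) ^ m).integrableOn_Icc)
    ((ae_restrict_iff' measurableSet_Icc).2 (ae_of_all _ hnonneg)),
    integral_Icc_eq_integral_Ioc, ← intervalIntegral.integral_of_le hh.le,
    intervalIntegral.integral_comp_div (fun u => (1 - u) ^ m) hh.ne',
    intervalIntegral.integral_comp_sub_left (fun u => u ^ m)]
  simp [div_self hh.ne', div_eq_mul_inv]

theorem setLIntegral_Icc_zero_ofReal {b : ℝ} (hb : 0 ≤ b) :
    ∫⁻ y in Icc 0 b, ENNReal.ofReal y = ENNReal.ofReal (b ^ 2 / 2) := by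
  rw [← ofReal_integral_eq_lintegral_ofReal (f := fun y => y) continuous_id.integrableOn_Icc
    ((ae_restrict_iff' measurableSet_Icc).2 (ae_of_all _ fun y (hy : y ∈ Icc 0 b) => hy.1)),
    integral_Icc_eq_integral_Ioc, ← intervalIntegral.integral_of_le hb, integral_id]
  simp

section ConvexGeometry

variable {V : Type*} [NormedAddCommGroup V] [NormedSpace ℝ V] {C S : Set V} {x : V}

theorem Convex.mem_of_mem_interior_convexJoin_singleton [Nontrivial V] (hC : Convex ℝ C)
    (hx : x ∈ interior (convexJoin ℝ {x} C)) : x ∈ C := by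
  obtain ⟨ε, hε, hball⟩ := Metric.mem_nhds_iff.1 (mem_interior_iff_mem_nhds.1 hx)
  obtain ⟨v, hv0, hvε⟩ : ∃ v : V, v ≠ 0 ∧ ‖v‖ < ε := by
    obtain ⟨u, hu⟩ := exists_ne (0 : V)
    refine ⟨(ε / 2 / ‖u‖) • u, smul_ne_zero (by positivity) hu, ?_⟩
    rw [norm_smul, Real.norm_of_nonneg (by positivity), div_mul_cancel₀ _ (norm_ne_zero_iff.2 hu)]
    linarith
  -- `x + v` and `x - v` lie on segments from `x` into `C`, so `x` is a convex combination
  -- of their endpoints.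
  have hsegment : ∀ w : V, w ≠ 0 → ‖w‖ < ε → ∃ c ∈ C, ∃ a : ℝ, 0 < a ∧ w = a • (c - x) := by
    intro w hw hwε
    have hxw : x + w ∈ convexJoin ℝ {x} C := hball (by simpa using hwε)
    simp only [convexJoin_singleton_left, mem_iUnion, segment_eq_image', mem_image] at hxw
    obtain ⟨c, hc, a, ha, hxa⟩ := hxw
    have hw' : w = a • (c - x) := by simpa using hxa.symm
    refine ⟨c, hc, a, ha.1.lt_of_ne ?_, hw'⟩
    rintro rfl
    exact hw (by simpa using hw')
  obtain ⟨c₁, hc₁, a, ha, hv₁⟩ := hsegment v hv0 hvε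
  obtain ⟨c₂, hc₂, b, hb, hv₂⟩ := hsegment (-v) (neg_ne_zero.2 hv0) (by rwa [norm_neg])
  have hx : x = (a / (a + b)) • c₁ + (b / (a + b)) • c₂ := by
    have e₁ : c₁ = x + a⁻¹ • v := by rw [hv₁, smul_smul, inv_mul_cancel₀ ha.ne', one_smul]; abel
    have e₂ : c₂ = x - b⁻¹ • v := by
      rw [sub_eq_add_neg, ← smul_neg, hv₂, smul_smul, inv_mul_cancel₀ hb.ne', one_smul]; abel
    rw [e₁, e₂]
    match_scalars <;> field_simp
    ring
  rw [hx]
  exact hC hc₁ hc₂ (by positivity) (by positivity) (by field_simp)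

theorem mem_interior_convexHull_insert_self_iff [Nontrivial V] (hS : S.Nonempty) :
    x ∈ interior (convexHull ℝ (insert x S)) ↔ x ∈ interior (convexHull ℝ S) := by
  rw [convexHull_insert hS]
  refine ⟨fun hx => ?_, fun hx => interior_mono (subset_convexJoin_right (singleton_nonempty x)) hx⟩
  have hxS := (convex_convexHull ℝ S).mem_of_mem_interior_convexJoin_singleton hx
  exact interior_mono (convexJoin_subset (singleton_subset_iff.2 hxS) subset_rfl
    (convex_convexHull ℝ S)) hx

theorem mem_frontier_convexHull_insert_iff [Nontrivial V] (hS : S.Nonempty) :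
    x ∈ frontier (convexHull ℝ (insert x S)) ↔ x ∉ interior (convexHull ℝ S) := by
  rw [← mem_interior_convexHull_insert_self_iff hS, frontier, mem_sdiff,
    and_iff_right (subset_closure (subset_convexHull ℝ _ (mem_insert x S)))]

theorem setOf_mem_frontier_convexHull_pair_union [Nontrivial V] (S : Set V) :
    {x : V × V | x.1 ∈ frontier (convexHull ℝ ({x.1, x.2} ∪ S)) ∧
        x.2 ∈ frontier (convexHull ℝ ({x.1, x.2} ∪ S))} =
      ({x | x.2 ∈ interior (convexHull ℝ (insert x.1 S))} ∪
        Prod.swap ⁻¹' {x | x.2 ∈ interior (convexHull ℝ (insert x.1 S))})ᶜ := by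
  ext ⟨p, q⟩
  have hpq : {p, q} ∪ S = insert p (insert q S) := by rw [insert_union, singleton_union]
  simp only [mem_ofPred_eq, mem_compl_iff, mem_union, mem_preimage, Prod.swap_prod_mk, not_or]
  rw [hpq, mem_frontier_convexHull_insert_iff (insert_nonempty q S), insert_comm,
    mem_frontier_convexHull_insert_iff (insert_nonempty p S), and_comm]

end ConvexGeometry

theorem IsClosed.measurableSet_setOf_mem_interior {X E : Type*} [TopologicalSpace X]
    [MeasurableSpace X] [NormedAddCommGroup E] [MeasurableSpace E] [OpensMeasurableSpace (X × E)]
    {G : Set (X × E)} (hG : IsClosed G) :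
    MeasurableSet {x : X × E | x.2 ∈ interior {y | (x.1, y) ∈ G}} := by
  have hclosed : ∀ r, IsClosed {x : X × E | closedBall x.2 r ⊆ {y | (x.1, y) ∈ G}} := by
    intro r
    have : {x : X × E | closedBall x.2 r ⊆ {y | (x.1, y) ∈ G}} =
        ⋂ v ∈ closedBall (0 : E) r, (fun x : X × E => (x.1, x.2 + v)) ⁻¹' G := by
      ext x
      simp only [mem_ofPred_eq, mem_iInter, mem_preimage, subset_def, mem_closedBall,
        dist_zero_right]
      refine ⟨fun h v hv => h _ (by simpa using hv), fun h y hy => ?_⟩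
      simpa using h (y - x.2) (by rwa [← dist_eq_norm])
    rw [this]
    exact isClosed_biInter fun v _ => hG.preimage (by fun_prop)
  have : {x : X × E | x.2 ∈ interior {y | (x.1, y) ∈ G}} =
      ⋃ n : ℕ, {x : X × E | closedBall x.2 (1 / (n + 1)) ⊆ {y | (x.1, y) ∈ G}} := by
    ext x
    simp [mem_interior_iff_mem_nhds, nhds_basis_closedBall_inv_nat_succ.mem_iff]
  rw [this]
  exact MeasurableSet.iUnion fun n => (hclosed _).measurableSet

theorem measureReal_prod_compl_union_swap {α : Type*} [MeasurableSpace α] (μ : Measure α)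
    [IsProbabilityMeasure μ] {A : Set (α × α)} (hA : MeasurableSet A)
    (hdisj : Disjoint A (Prod.swap ⁻¹' A)) :
    (μ.prod μ).real (A ∪ Prod.swap ⁻¹' A)ᶜ = 1 - 2 * (μ.prod μ).real A := by
  have hswap : (μ.prod μ).real (Prod.swap ⁻¹' A) = (μ.prod μ).real A := by
    rw [measureReal_def, measureReal_def, ← Measure.map_apply measurable_swap hA,
      Measure.prod_swap]
  rw [probReal_compl_eq_one_sub (hA.union (hA.preimage measurable_swap)),
    measureReal_union hdisj (hA.preimage measurable_swap), hswap]
  ring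

section Fubini

variable {m : ℕ}

theorem measurePreserving_snoc :
    MeasurePreserving (fun yz : ℝ × (Fin m → ℝ) => (Fin.snoc yz.2 yz.1 : Fin (m + 1) → ℝ))
      (volume.prod volume) volume := by
  have h := (volume_preserving_piFinSuccAbove (fun _ : Fin (m + 1) => ℝ) (Fin.last m)).symm
  have e : ⇑(MeasurableEquiv.piFinSuccAbove (fun _ : Fin (m + 1) => ℝ) (Fin.last m)).symm =
      fun yz : ℝ × (Fin m → ℝ) => (Fin.snoc yz.2 yz.1 : Fin (m + 1) → ℝ) := by
    funext yz
    rw [MeasurableEquiv.piFinSuccAbove_symm_apply, Fin.insertNthEquiv_last]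
    rfl
  rwa [e] at h

theorem lintegral_eq_lintegral_lintegral_snoc {f : (Fin (m + 1) → ℝ) → ENNReal}
    (hf : Measurable f) : ∫⁻ x, f x = ∫⁻ z, ∫⁻ y, f (Fin.snoc z y) := by
  rw [← measurePreserving_snoc.lintegral_comp hf]
  exact lintegral_prod_symm (fun yz => f (Fin.snoc yz.2 yz.1))
    (hf.comp measurePreserving_snoc.measurable).aemeasurable

theorem volume_eq_lintegral_volume_snoc {s : Set (Fin (m + 1) → ℝ)} (hs : MeasurableSet s) :
    volume s = ∫⁻ y, volume {z : Fin m → ℝ | Fin.snoc z y ∈ s} := by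
  rw [← measurePreserving_snoc.measure_preimage hs.nullMeasurableSet,
    Measure.prod_apply (hs.preimage measurePreserving_snoc.measurable)]
  rfl

end Fubini

section FloorCone

variable {m : ℕ} {F : Set (Fin m → ℝ)} {p q : Fin (m + 1) → ℝ}

def floorCone (F : Set (Fin m → ℝ)) (p : Fin (m + 1) → ℝ) : Set (Fin (m + 1) → ℝ) :=
  convexHull ℝ (insert p (floorEmb m F))

theorem convex_floorEmb (hF : Convex ℝ F) : Convex ℝ (floorEmb m F) := by
  rintro _ ⟨z, hz, rfl⟩ _ ⟨z', hz', rfl⟩ a b ha hb hab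
  exact ⟨a • z + b • z', hF hz hz' ha hb hab, by simp [Fin.smul_snoc_add_smul_snoc]⟩

theorem mem_floorCone_iff (hFne : F.Nonempty) (hF : Convex ℝ F) :
    q ∈ floorCone F p ↔ ∃ θ ∈ Icc (0 : ℝ) 1, ∃ w ∈ F, (1 - θ) • p + θ • Fin.snoc w 0 = q := by
  have hne : (floorEmb m F).Nonempty := hFne.image _
  rw [floorCone, convexHull_insert hne, (convex_floorEmb hF).convexHull_eq]
  simp only [convexJoin_singleton_left, mem_iUnion, segment_eq_image, floorEmb, mem_image,
    exists_prop]
  constructor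
  · rintro ⟨_, ⟨w, hw, rfl⟩, θ, hθ, rfl⟩
    exact ⟨θ, hθ, w, hw, rfl⟩
  · rintro ⟨θ, hθ, w, hw, rfl⟩
    exact ⟨_, ⟨w, hw, rfl⟩, θ, hθ, rfl⟩

theorem snoc_mem_floorCone_iff (hFne : F.Nonempty) (hF : Convex ℝ F) {z : Fin m → ℝ} {y : ℝ} :
    Fin.snoc z y ∈ floorCone F p ↔ ∃ θ ∈ Icc (0 : ℝ) 1,
      (1 - θ) * p (Fin.last m) = y ∧ z ∈ AffineMap.homothety (Fin.init p) θ '' F := by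
  rw [mem_floorCone_iff hFne hF]
  conv_lhs => rw [← Fin.snoc_init_self p]
  simp only [Fin.smul_snoc_add_smul_snoc, Fin.snoc_inj, mul_zero, add_zero, mem_image,
    AffineMap.homothety_eq_lineMap, AffineMap.lineMap_apply_module]
  constructor
  · rintro ⟨θ, hθ, w, hw, hz, hy⟩
    exact ⟨θ, hθ, hy, w, hw, hz⟩
  · rintro ⟨θ, hθ, hy, w, hw, hz⟩
    exact ⟨θ, hθ, w, hw, hz, hy⟩

theorem floorCone_subset_slab (F : Set (Fin m → ℝ)) (p : Fin (m + 1) → ℝ) :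
    floorCone F p ⊆ Function.eval (Fin.last m) ⁻¹' uIcc 0 (p (Fin.last m)) := by
  refine convexHull_min (insert_subset_iff.2 ⟨right_mem_uIcc, ?_⟩) ?_
  · rintro _ ⟨z, -, rfl⟩
    simp
  · exact (convex_uIcc _ _).linear_preimage (LinearMap.proj (Fin.last m))

theorem abs_last_lt_of_mem_interior_floorCone (hq : q ∈ interior (floorCone F p)) :
    |q (Fin.last m)| < |p (Fin.last m)| := by
  have hslab := interior_mono (floorCone_subset_slab F p) hq
  rw [← (isOpenMap_eval (Fin.last m)).preimage_interior_eq_interior_preimage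
    (continuous_apply _), uIcc, interior_Icc, mem_preimage, Function.eval] at hslab
  rcases le_total 0 (p (Fin.last m)) with h | h
  · rw [min_eq_left h, max_eq_right h] at hslab
    rw [abs_of_pos hslab.1, abs_of_nonneg h]
    exact hslab.2
  · rw [min_eq_right h, max_eq_left h] at hslab
    rw [abs_of_neg hslab.2, abs_of_nonpos h]
    linarith [hslab.1]

theorem isClosed_setOf_mem_floorCone (hFne : F.Nonempty) (hF : Convex ℝ F) (hFc : IsCompact F) :
    IsClosed {pq : (Fin (m + 1) → ℝ) × (Fin (m + 1) → ℝ) | pq.2 ∈ floorCone F pq.1} := by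
  have := isCompact_iff_compactSpace.1 (isCompact_Icc.prod hFc : IsCompact (Icc (0 : ℝ) 1 ×ˢ F))
  let Z : Set (((Fin (m + 1) → ℝ) × (Fin (m + 1) → ℝ)) × ↥(Icc (0 : ℝ) 1 ×ˢ F)) :=
    {x | (1 - x.2.1.1) • x.1.1 + x.2.1.1 • Fin.snoc x.2.1.2 0 = x.1.2}
  have hZ : IsClosed Z := isClosed_eq (by fun_prop) (by fun_prop)
  convert isClosedMap_fst_of_compactSpace Z hZ
  ext pq
  simp only [mem_ofPred_eq, mem_floorCone_iff hFne hF, mem_image, Prod.exists, Z]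
  constructor
  · rintro ⟨θ, hθ, w, hw, h⟩
    exact ⟨pq.1, pq.2, ⟨(θ, w), hθ, hw⟩, h, rfl⟩
  · rintro ⟨a, b, ⟨⟨θ, w⟩, hθ, hw⟩, h, rfl⟩
    exact ⟨θ, hθ, w, hw, h⟩

theorem convex_floorCone (F : Set (Fin m → ℝ)) (p : Fin (m + 1) → ℝ) :
    Convex ℝ (floorCone F p) :=
  convex_convexHull ℝ _

theorem setOf_snoc_mem_floorCone_eq_image (hFne : F.Nonempty) (hF : Convex ℝ F)
    (hp : 0 < p (Fin.last m)) {y : ℝ} (hy : y ∈ Icc 0 (p (Fin.last m))) :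
    {z | Fin.snoc z y ∈ floorCone F p} =
      AffineMap.homothety (Fin.init p) (1 - y / p (Fin.last m)) '' F := by
  ext z
  rw [mem_ofPred_eq, snoc_mem_floorCone_iff hFne hF]
  constructor
  · rintro ⟨θ, -, hθy, hz⟩
    obtain rfl : θ = 1 - y / p (Fin.last m) := by field_simp; linarith
    exact hz
  · refine fun hz => ⟨1 - y / p (Fin.last m), ⟨?_, ?_⟩, by field_simp; ring, hz⟩
    · rw [sub_nonneg, div_le_one hp]
      exact hy.2
    · linarith [div_nonneg hy.1 hp.le]

theorem setOf_snoc_mem_floorCone_eq_empty (hFne : F.Nonempty) (hF : Convex ℝ F)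
    (hp : 0 ≤ p (Fin.last m)) {y : ℝ} (hy : y ∉ Icc 0 (p (Fin.last m))) :
    {z | Fin.snoc z y ∈ floorCone F p} = ∅ := by
  refine eq_empty_of_forall_notMem fun z hz => hy ?_
  obtain ⟨θ, hθ, rfl, -⟩ := (snoc_mem_floorCone_iff hFne hF).1 hz
  exact ⟨mul_nonneg (by linarith [hθ.2]) hp, by nlinarith [hθ.1]⟩

theorem volume_floorCone (hFne : F.Nonempty) (hF : Convex ℝ F) (hFc : IsCompact F)
    (hp : 0 ≤ p (Fin.last m)) :
    volume (floorCone F p) = ENNReal.ofReal (p (Fin.last m) / (m + 1)) * volume F := by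
  rcases hp.eq_or_lt with hp0 | hp0
  · have hnull : volume (floorCone F p) = 0 := by
      refine measure_mono_null (floorCone_subset_slab F p) ?_
      rw [← hp0, uIcc_self]
      exact Measure.pi_hyperplane _ _ _
    simp [hnull, ← hp0]
  have hslices : ∀ y, volume {z | Fin.snoc z y ∈ floorCone F p} =
      (Icc 0 (p (Fin.last m))).indicator
        (fun y => ENNReal.ofReal ((1 - y / p (Fin.last m)) ^ m) * volume F) y := by
    intro y
    by_cases hy : y ∈ Icc 0 (p (Fin.last m))
    · have hθ : 0 ≤ 1 - y / p (Fin.last m) := by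
        rw [sub_nonneg, div_le_one hp0]
        exact hy.2
      rw [indicator_of_mem hy, setOf_snoc_mem_floorCone_eq_image hFne hF hp0 hy,
        Measure.addHaar_image_homothety, Module.finrank_fin_fun, abs_of_nonneg (pow_nonneg hθ m)]
    · rw [indicator_of_notMem hy, setOf_snoc_mem_floorCone_eq_empty hFne hF hp hy, measure_empty]
  have hmeas : MeasurableSet (floorCone F p) :=
    ((isClosed_setOf_mem_floorCone hFne hF hFc).preimage (Continuous.prodMk_right p)).measurableSet
  rw [volume_eq_lintegral_volume_snoc hmeas, lintegral_congr hslices,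
    lintegral_indicator measurableSet_Icc, lintegral_mul_const _ (by fun_prop),
    setLIntegral_Icc_ofReal_one_sub_div_pow m hp0]

theorem measurableSet_setOf_mem_interior_floorCone (hFne : F.Nonempty) (hF : Convex ℝ F)
    (hFc : IsCompact F) :
    MeasurableSet {x : (Fin (m + 1) → ℝ) × (Fin (m + 1) → ℝ) | x.2 ∈ interior (floorCone F x.1)} :=
  (isClosed_setOf_mem_floorCone hFne hF hFc).measurableSet_setOf_mem_interior

theorem disjoint_setOf_mem_interior_floorCone_swap (F : Set (Fin m → ℝ)) :
    Disjoint {x | x.2 ∈ interior (floorCone F x.1)}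
      (Prod.swap ⁻¹' {x | x.2 ∈ interior (floorCone F x.1)}) :=
  disjoint_left.2 fun _ h₁ h₂ =>
    (abs_last_lt_of_mem_interior_floorCone h₁).not_gt (abs_last_lt_of_mem_interior_floorCone h₂)

end FloorCone

section TopFunction

variable {m : ℕ} {F : Set (Fin m → ℝ)} {K : Set (Fin (m + 1) → ℝ)}

theorem bddAbove_setOf_snoc_mem (hK : IsCompact K) (z : Fin m → ℝ) :
    BddAbove {y | Fin.snoc z y ∈ K} :=
  (hK.image (continuous_apply (Fin.last m))).bddAbove.mono
    (by rintro y hy; exact ⟨_, hy, Fin.snoc_last _ _⟩)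

theorem setOf_snoc_mem_eq_Icc (hK : IsCompact K) (hKc : Convex ℝ K)
    (hK0 : K ⊆ {x | 0 ≤ x (Fin.last m)}) {z : Fin m → ℝ} (hz : Fin.snoc z 0 ∈ K) :
    {y | Fin.snoc z y ∈ K} = Icc 0 (sSup {y | Fin.snoc z y ∈ K}) := by
  set s := {y | Fin.snoc z y ∈ K}
  have hleast : IsLeast s 0 := ⟨hz, fun y hy => by simpa using hK0 hy⟩
  have hconv : Convex ℝ s := by
    intro y₁ h₁ y₂ h₂ a b ha hb hab
    have := hKc h₁ h₂ ha hb hab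
    rwa [Fin.smul_snoc_add_smul_snoc, Convex.combo_self hab] at this
  have hclosed : IsClosed s := hK.isClosed.preimage (by fun_prop)
  conv_lhs => rw [eq_Icc_csInf_csSup_of_connected_bdd_closed (hconv.isConnected ⟨0, hleast.1⟩)
    hleast.bddBelow (bddAbove_setOf_snoc_mem hK z) hclosed, hleast.csInf_eq]

variable (hK : IsCompact K) (hKc : Convex ℝ K) (hK0 : K ⊆ {x | 0 ≤ x (Fin.last m)})
  (hFK : floorEmb m F ⊆ K) (hF : MeasurableSet F)
include hK hKc hK0 hFK hF

theorem lintegral_last_eq_lintegral_sSup_sq (hKF : K ⊆ {x | Fin.init x ∈ F}) :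
    ∫⁻ x in K, ENNReal.ofReal (x (Fin.last m)) =
      ∫⁻ z in F, ENNReal.ofReal (sSup {y | Fin.snoc z y ∈ K} ^ 2 / 2) := by
  rw [← lintegral_indicator hK.isClosed.measurableSet,
    lintegral_eq_lintegral_lintegral_snoc ((by fun_prop : Measurable fun x :
      Fin (m + 1) → ℝ => ENNReal.ofReal (x (Fin.last m))).indicator hK.isClosed.measurableSet),
    ← lintegral_indicator hF]
  refine lintegral_congr fun z => ?_
  have hcolumn : ∀ y, K.indicator (fun x => ENNReal.ofReal (x (Fin.last m))) (Fin.snoc z y) =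
      {y | Fin.snoc z y ∈ K}.indicator ENNReal.ofReal y := by
    intro y
    by_cases hy : Fin.snoc z y ∈ K <;> simp [hy]
  simp_rw [hcolumn]
  have hmeas : MeasurableSet {y | Fin.snoc z y ∈ K} :=
    hK.isClosed.measurableSet.preimage
      (by fun_prop : Measurable fun y : ℝ => (Fin.snoc z y : Fin (m + 1) → ℝ))
  rw [lintegral_indicator hmeas]
  by_cases hz : z ∈ F
  · rw [indicator_of_mem hz]
    conv_lhs => rw [setOf_snoc_mem_eq_Icc hK hKc hK0 (hFK ⟨z, hz, rfl⟩)]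
    exact setLIntegral_Icc_zero_ofReal
      (le_csSup (bddAbove_setOf_snoc_mem hK z) (hFK ⟨z, hz, rfl⟩))
  · have hempty : {y | Fin.snoc z y ∈ K} = ∅ :=
      eq_empty_of_forall_notMem fun y hy => hz (by simpa using hKF hy)
    simp [indicator_of_notMem hz, hempty]

theorem aemeasurable_sSup_setOf_snoc_mem :
    AEMeasurable (fun z => sSup {y | Fin.snoc z y ∈ K}) (volume.restrict F) := by
  have hmeas : Measurable fun z => volume {y | Fin.snoc z y ∈ K} :=
    measurable_measure_prodMk_left (hK.isClosed.measurableSet.preimage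
      (by fun_prop : Measurable fun zy : (Fin m → ℝ) × ℝ => (Fin.snoc zy.1 zy.2 : Fin (m + 1) → ℝ)))
  refine hmeas.ennreal_toReal.aemeasurable.congr
    ((ae_restrict_iff' hF).2 (ae_of_all _ fun z hz => ?_))
  change (volume {y | Fin.snoc z y ∈ K}).toReal = _
  conv_lhs => rw [setOf_snoc_mem_eq_Icc hK hKc hK0 (hFK ⟨z, hz, rfl⟩)]
  rw [Real.volume_Icc, sub_zero,
    ENNReal.toReal_ofReal (le_csSup (bddAbove_setOf_snoc_mem hK z) (hFK ⟨z, hz, rfl⟩))]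

theorem toReal_lintegral_last_eq_integral_sSup_sq (hKF : K ⊆ {x | Fin.init x ∈ F}) :
    (∫⁻ x in K, ENNReal.ofReal (x (Fin.last m))).toReal =
      (∫ z in F, sSup {y | Fin.snoc z y ∈ K} ^ 2) / 2 := by
  rw [lintegral_last_eq_lintegral_sSup_sq hK hKc hK0 hFK hF hKF, ← integral_div,
    integral_eq_lintegral_of_nonneg_ae (ae_of_all _ fun z => by positivity)
      (((aemeasurable_sSup_setOf_snoc_mem hK hKc hK0 hFK hF).pow_const 2).div_const
        2).aestronglyMeasurable]

end TopFunction

theorem prod_setOf_mem_interior_floorCone {m : ℕ} {F : Set (Fin m → ℝ)}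
    {K : Set (Fin (m + 1) → ℝ)} (hFne : F.Nonempty) (hF : Convex ℝ F) (hFc : IsCompact F)
    (hKm : MeasurableSet K) (hKc : Convex ℝ K) (hK0 : K ⊆ {x | 0 ≤ x (Fin.last m)})
    (hFK : floorEmb m F ⊆ K) :
    ((volume.restrict K).prod (volume.restrict K)) {x | x.2 ∈ interior (floorCone F x.1)} =
      (∫⁻ x in K, ENNReal.ofReal (x (Fin.last m))) * ENNReal.ofReal (1 / (m + 1)) * volume F := by
  rw [Measure.prod_apply (measurableSet_setOf_mem_interior_floorCone hFne hF hFc),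
    ← lintegral_mul_const _ (by fun_prop), ← lintegral_mul_const _ (by fun_prop)]
  refine setLIntegral_congr_fun hKm fun p hp => ?_
  have hconeK : floorCone F p ⊆ K := convexHull_min (insert_subset hp hFK) hKc
  change volume.restrict K (interior (floorCone F p)) = _
  rw [Measure.restrict_apply isOpen_interior.measurableSet,
    inter_eq_left.2 (interior_subset.trans hconeK),
    measure_interior_of_null_frontier ((convex_floorCone F p).addHaar_frontier volume),
    volume_floorCone hFne hF hFc (hK0 hp), ← ENNReal.ofReal_mul' (by positivity), mul_one_div]

theorem stmt1_general (m : ℕ) (F : Set (Fin m → ℝ))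
    (hFcomp : IsCompact F) (hFconv : Convex ℝ F) (hFvol : volume F = 1)
    (K : Set (Fin (m + 1) → ℝ)) (hKcomp : IsCompact K) (hKconv : Convex ℝ K)
    (hKfloor : HasFloor m F K) (hKvol : volume K = 1)
    (hKsub : IsSubPrism m F K) :
    Qtwo m F K =
      1 - (1 / ((m : ℝ) + 1)) * ∫ z in F, (sSup {y : ℝ | Fin.snoc z y ∈ K}) ^ 2 := by
  obtain ⟨hK0, hKfloor⟩ := hKfloor
  obtain ⟨_, -, hKF⟩ := hKsub
  have hFne : F.Nonempty := nonempty_of_measure_ne_zero (μ := volume) (by simp [hFvol])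
  have hFK : floorEmb m F ⊆ K := hKfloor ▸ inter_subset_left
  have : IsProbabilityMeasure (volume.restrict K) := ⟨by simp [hKvol]⟩
  rw [Qtwo, setOf_mem_frontier_convexHull_pair_union]
  refine (measureReal_prod_compl_union_swap _
    (measurableSet_setOf_mem_interior_floorCone hFne hFconv hFcomp)
    (disjoint_setOf_mem_interior_floorCone_swap F)).trans ?_
  rw [measureReal_def, prod_setOf_mem_interior_floorCone hFne hFconv hFcomp
    hKcomp.isClosed.measurableSet hKconv hK0 hFK, hFvol, mul_one, ENNReal.toReal_mul,
    toReal_lintegral_last_eq_integral_sSup_sq hKcomp hKconv hK0 hFK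
      hFcomp.isClosed.measurableSet fun x hx => (hKF hx).1, ENNReal.toReal_ofReal (by positivity)]
  ring

/-- For a sub-prism `K` with floor `F` and volume `1`,
`Q_K(2) = 1 - (1/d) ∫_F G_K(z)² dz` where `G_K` is the top function of `K`. -/
theorem stmt1 (m : ℕ) (hm : 1 ≤ m) (F : Set (Fin m → ℝ))
    (hFcomp : IsCompact F) (hFconv : Convex ℝ F) (hFvol : volume F = 1)
    (K : Set (Fin (m + 1) → ℝ)) (hKcomp : IsCompact K) (hKconv : Convex ℝ K)
    (hKfloor : HasFloor m F K) (hKvol : volume K = 1)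
    (hKsub : IsSubPrism m F K) :
    Qtwo m F K =
      1 - (1 / ((m : ℝ) + 1)) * ∫ z in F, (sSup {y : ℝ | Fin.snoc z y ∈ K}) ^ 2 :=
  stmt1_general m F hFcomp hFconv hFvol K hKcomp hKconv hKfloor hKvol hKsub

end
end

section
/- Let d ≥ 2 and let F ⊆ ℝ^{d-1} be a compact convex set with (d-1)-dimensional Lebesgue measure 1. For every compact convex set K ⊆ ℝ^d with floor F and Vol_d(K) = 1, one has Q_K(2) < 1. -/
open MeasureTheory Set

noncomputable section

/-- A convex set of positive volume has nonempty interior. -/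
lemma aux_interior_nonempty {n : ℕ} {s : Set (Fin n → ℝ)} (hconv : Convex ℝ s)
    (hvol : volume s ≠ 0) : (interior s).Nonempty := by
  rw [hconv.interior_nonempty_iff_affineSpan_eq_top]
  by_contra hspan
  exact hvol (measure_mono_null (subset_affineSpan ℝ s)
    (MeasureTheory.Measure.addHaar_affineSubspace _ _ hspan))

/-- A fixed small ball above the center of the floor lies in the convex hull of the floor
together with any point `p1` at height at least `h`. -/
lemma aux_ball_subset_hull (m : ℕ) (F : Set (Fin m → ℝ)) (z0 : Fin m → ℝ) (r : ℝ)
    (hr : 0 < r) (hball : Metric.ball z0 r ⊆ F)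
    (M h ε : ℝ) (hM : 0 < M) (hh : 0 < h)
    (hε : 0 < ε) (hε1 : ε ≤ h / 3) (hε2 : ε * (h + 3 * M) ≤ r * h / 2)
    (p1 : Fin (m + 1) → ℝ) (hp1h : h ≤ p1 (Fin.last m))
    (hp1M : ∀ j : Fin m, |z0 j| + |p1 (Fin.castSucc j)| ≤ M) :
    Metric.ball (Fin.snoc z0 ε) (ε / 2) ⊆ convexHull ℝ ({p1} ∪ floorEmb m F) := by
  intro y hy
  set q : Fin (m + 1) → ℝ := Fin.snoc z0 ε with hq
  have hdist : ∀ i, |y i - q i| < ε / 2 := by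
    intro i
    have := dist_le_pi_dist y q i
    rw [Real.dist_eq] at this
    exact lt_of_le_of_lt this (Metric.mem_ball.1 hy)
  have hqlast : q (Fin.last m) = ε := Fin.snoc_last _ _
  have hqcast : ∀ j : Fin m, q (Fin.castSucc j) = z0 j := fun j => Fin.snoc_castSucc _ _ _
  set h1 := p1 (Fin.last m) with hh1
  have hh1pos : 0 < h1 := lt_of_lt_of_le hh hp1h
  set u := y (Fin.last m) with hu
  have hulast : |u - ε| < ε / 2 := by simpa [hqlast] using hdist (Fin.last m)
  have hu1 : ε / 2 < u := by cases abs_lt.1 hulast; linarith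
  have hu2 : u < 3 * ε / 2 := by cases abs_lt.1 hulast; linarith
  set s := u / h1 with hs
  have hs0 : 0 < s := div_pos (by linarith) hh1pos
  have hsh1 : s * h1 = u := div_mul_cancel₀ _ (ne_of_gt hh1pos)
  have hsh : 2 * (s * h) ≤ 3 * ε := by
    have : s * h ≤ s * h1 := by nlinarith
    nlinarith
  have hs12 : s ≤ 1 / 2 := by nlinarith
  have h1s : (0:ℝ) < 1 - s := by linarith
  set z : Fin m → ℝ := fun j => (y (Fin.castSucc j) - s * p1 (Fin.castSucc j)) / (1 - s) with hz
  have hzmul : ∀ j, z j * (1 - s) = y (Fin.castSucc j) - s * p1 (Fin.castSucc j) :=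
    fun j => div_mul_cancel₀ _ (ne_of_gt h1s)
  have hzF : z ∈ F := by
    apply hball
    rw [Metric.mem_ball, dist_pi_lt_iff hr]
    intro j
    rw [Real.dist_eq]
    have key : |z j - z0 j| * (1 - s) ≤ ε / 2 + s * M := by
      have e1 : (z j - z0 j) * (1 - s) =
          (y (Fin.castSucc j) - z0 j) + s * (z0 j - p1 (Fin.castSucc j)) := by
        rw [sub_mul, hzmul j]; ring
      calc |z j - z0 j| * (1 - s) = |(z j - z0 j) * (1 - s)| := by
            rw [abs_mul, abs_of_pos h1s]
        _ = |(y (Fin.castSucc j) - z0 j) + s * (z0 j - p1 (Fin.castSucc j))| := by rw [e1]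
        _ ≤ |y (Fin.castSucc j) - z0 j| + s * |z0 j - p1 (Fin.castSucc j)| := by
            refine (abs_add_le _ _).trans ?_
            rw [abs_mul, abs_of_pos hs0]
        _ ≤ ε / 2 + s * M := by
            have h1 : |y (Fin.castSucc j) - z0 j| < ε / 2 := by
              simpa [hqcast j] using hdist (Fin.castSucc j)
            have h2 : |z0 j - p1 (Fin.castSucc j)| ≤ M :=
              (abs_sub _ _).trans (hp1M j)
            nlinarith
    have final : ε / 2 + s * M < r * (1 - s) := by nlinarith
    exact lt_of_mul_lt_mul_right (lt_of_le_of_lt key final) (le_of_lt h1s)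
  have hcomb : (1 - s) • (Fin.snoc z 0 : Fin (m+1) → ℝ) + s • p1 = y := by
    funext i
    refine Fin.lastCases ?_ ?_ i
    · simp only [Pi.add_apply, Pi.smul_apply, smul_eq_mul, Fin.snoc_last]
      rw [← hh1, ← hu]
      nlinarith [hsh1]
    · intro j
      simp only [Pi.add_apply, Pi.smul_apply, smul_eq_mul, Fin.snoc_castSucc]
      nlinarith [hzmul j]
  have hmem1 : (Fin.snoc z 0 : Fin (m+1) → ℝ) ∈ convexHull ℝ ({p1} ∪ floorEmb m F) :=
    subset_convexHull ℝ _ (mem_union_right _ ⟨z, hzF, rfl⟩)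
  have hmem2 : p1 ∈ convexHull ℝ ({p1} ∪ floorEmb m F) :=
    subset_convexHull ℝ _ (mem_union_left _ rfl)
  rw [← hcomb]
  exact (convex_convexHull ℝ _) hmem1 hmem2 (by linarith) (le_of_lt hs0) (by ring)

/-- For every compact convex `K` with floor `F` and volume `1`, `Q_K(2) < 1`. -/
theorem stmt6 (m : ℕ) (hm : 1 ≤ m) (F : Set (Fin m → ℝ))
    (hFcomp : IsCompact F) (hFconv : Convex ℝ F) (hFvol : volume F = 1)
    (K : Set (Fin (m + 1) → ℝ)) (hKcomp : IsCompact K) (hKconv : Convex ℝ K)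
    (hKfloor : HasFloor m F K) (hKvol : volume K = 1) :
    Qtwo m F K < 1 := by
  classical
  have hKmeas : MeasurableSet K := hKcomp.isClosed.measurableSet
  have hFK : floorEmb m F ⊆ K := by rw [← hKfloor.2]; exact inter_subset_left
  -- an interior point of F with a ball
  obtain ⟨z0, hz0⟩ := aux_interior_nonempty hFconv (by rw [hFvol]; exact one_ne_zero)
  obtain ⟨r, hr, hrball⟩ := Metric.isOpen_iff.1 isOpen_interior z0 hz0
  have hrF : Metric.ball z0 r ⊆ F := hrball.trans interior_subset
  -- an interior point of K with a ball
  obtain ⟨x0, hx0⟩ := aux_interior_nonempty hKconv (by rw [hKvol]; exact one_ne_zero)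
  obtain ⟨δ, hδ, hδball⟩ := Metric.isOpen_iff.1 isOpen_interior x0 hx0
  have hδK : Metric.ball x0 δ ⊆ K := hδball.trans interior_subset
  have hx0K : x0 ∈ K := interior_subset hx0
  -- the interior point sits at positive height
  have hx0last : δ / 2 ≤ x0 (Fin.last m) := by
    set p := Function.update x0 (Fin.last m) (x0 (Fin.last m) - δ / 2) with hp
    have hpK : p ∈ K := by
      apply hδK
      rw [Metric.mem_ball, dist_pi_lt_iff hδ]
      intro i
      rcases eq_or_ne i (Fin.last m) with hi | hi
      · subst hi
        simp only [hp, Function.update_self, Real.dist_eq]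
        rw [abs_of_nonpos (by linarith)]
        linarith
      · simp [hp, Function.update_of_ne hi, Real.dist_eq, hδ]
    have h0 := hKfloor.1 hpK
    simp only [mem_setOf_eq, hp, Function.update_self] at h0
    linarith
  obtain ⟨h, hh, hhdef⟩ : ∃ h : ℝ, 0 < h ∧ h = x0 (Fin.last m) - δ / 4 :=
    ⟨_, by linarith, rfl⟩
  set B₁ : Set (Fin (m + 1) → ℝ) := K ∩ {p | h ≤ p (Fin.last m)} with hB₁def
  have hB₁ball : Metric.ball x0 (δ / 4) ⊆ B₁ := by
    intro p hp
    have hpK : p ∈ K := hδK (Metric.ball_subset_ball (by linarith) hp)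
    refine ⟨hpK, ?_⟩
    have h1 := dist_le_pi_dist p x0 (Fin.last m)
    rw [Real.dist_eq] at h1
    have h2 : |p (Fin.last m) - x0 (Fin.last m)| < δ / 4 :=
      lt_of_le_of_lt h1 (Metric.mem_ball.1 hp)
    have h3 := (abs_lt.1 h2).1
    simp only [mem_setOf_eq]
    linarith
  -- bound for K
  obtain ⟨R, hR⟩ := isBounded_iff_forall_norm_le.1 hKcomp.isBounded
  obtain ⟨M, hM, hMz, hMR⟩ : ∃ M : ℝ, 0 < M ∧ ‖z0‖ ≤ M - 1 ∧ |R| ≤ M - ‖z0‖ - 1 :=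
    ⟨‖z0‖ + |R| + 1, by positivity, by simp [abs_nonneg], le_of_eq (by ring)⟩
  have hp1M : ∀ p1 ∈ K, ∀ j : Fin m, |z0 j| + |p1 (Fin.castSucc j)| ≤ M := by
    intro p1 hp1 j
    have h1 : |z0 j| ≤ ‖z0‖ := by
      have := norm_le_pi_norm z0 j; rwa [Real.norm_eq_abs] at this
    have h2 : |p1 (Fin.castSucc j)| ≤ |R| := by
      have := norm_le_pi_norm p1 (Fin.castSucc j)
      rw [Real.norm_eq_abs] at this
      exact this.trans ((hR p1 hp1).trans (le_abs_self R))
    linarith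
  obtain ⟨ε, hε, hε1, hε2⟩ : ∃ ε : ℝ, 0 < ε ∧ ε ≤ h / 3 ∧ ε * (h + 3 * M) ≤ r * h / 2 := by
    refine ⟨min (h / 3) (r * h / (2 * (h + 3 * M))), lt_min (by positivity) (by positivity),
      min_le_left _ _, ?_⟩
    have h3 := min_le_right (h / 3) (r * h / (2 * (h + 3 * M)))
    rw [le_div_iff₀ (by positivity)] at h3
    nlinarith [h3]
  set q : Fin (m + 1) → ℝ := Fin.snoc z0 ε with hqdef
  set B₂ : Set (Fin (m + 1) → ℝ) := Metric.ball q (ε / 2) with hB₂def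
  have hB₂hull : ∀ p1 ∈ B₁, B₂ ⊆ convexHull ℝ ({p1} ∪ floorEmb m F) := fun p1 hp1 =>
    aux_ball_subset_hull m F z0 r hr hrF M h ε hM hh hε hε1 hε2 p1 hp1.2 (hp1M p1 hp1.1)
  have hx0B₁ : x0 ∈ B₁ := ⟨hx0K, by simp only [mem_setOf_eq]; linarith⟩
  have hB₂K : B₂ ⊆ K :=
    (hB₂hull x0 hx0B₁).trans
      (convexHull_min (union_subset (singleton_subset_iff.2 hx0K) hFK) hKconv)
  -- measure-theoretic conclusion
  set μK := volume.restrict K with hμK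
  set P := μK.prod μK with hP
  set S : Set ((Fin (m + 1) → ℝ) × (Fin (m + 1) → ℝ)) :=
    {p | p.1 ∈ frontier (convexHull ℝ ({p.1, p.2} ∪ floorEmb m F)) ∧
      p.2 ∈ frontier (convexHull ℝ ({p.1, p.2} ∪ floorEmb m F))} with hSdef
  have hB₁meas : MeasurableSet B₁ :=
    hKmeas.inter (measurableSet_le measurable_const (measurable_pi_apply _))
  have hB₂meas : MeasurableSet B₂ := measurableSet_ball
  have hPB : P (B₁ ×ˢ B₂) = volume B₁ * volume B₂ := by
    rw [hP, Measure.prod_prod, hμK, Measure.restrict_apply' hKmeas,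
      Measure.restrict_apply' hKmeas, inter_eq_left.2 inter_subset_left,
      inter_eq_left.2 hB₂K]
  have hB₁pos : 0 < volume B₁ :=
    lt_of_lt_of_le (Metric.measure_ball_pos _ _ (by positivity)) (measure_mono hB₁ball)
  have hB₂pos : 0 < volume B₂ := Metric.measure_ball_pos _ _ (by positivity)
  have hPBpos : 0 < P (B₁ ×ˢ B₂) := by
    rw [hPB]; exact ENNReal.mul_pos hB₁pos.ne' hB₂pos.ne'
  have hPuniv : P univ = 1 := by
    rw [hP, ← univ_prod_univ, Measure.prod_prod, hμK, Measure.restrict_apply_univ, hKvol,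
      one_mul]
  have hPBne : P (B₁ ×ˢ B₂) ≠ ⊤ := by
    have : P (B₁ ×ˢ B₂) ≤ 1 := hPuniv ▸ measure_mono (subset_univ _)
    exact (this.trans_lt ENNReal.one_lt_top).ne
  have hSsub : S ⊆ (B₁ ×ˢ B₂)ᶜ := by
    rintro ⟨p1, p2⟩ hpS hpB
    obtain ⟨hp1, hp2⟩ := hpB
    have hint : p2 ∈ interior (convexHull ℝ ({p1, p2} ∪ floorEmb m F)) := by
      refine interior_maximal ?_ Metric.isOpen_ball hp2
      refine (hB₂hull p1 hp1).trans (convexHull_mono ?_)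
      exact union_subset_union_left _ (singleton_subset_iff.2 (mem_insert _ _))
    exact hpS.2.2 hint
  have hle : P S ≤ P (B₁ ×ˢ B₂)ᶜ := measure_mono hSsub
  rw [measure_compl (hB₁meas.prod hB₂meas) hPBne, hPuniv] at hle
  have hPS : P S < 1 :=
    lt_of_le_of_lt hle (ENNReal.sub_lt_self ENNReal.one_ne_top one_ne_zero hPBpos.ne')
  have hQ : Qtwo m F K = (P S).toReal := rfl
  rw [hQ]
  have hfin := (ENNReal.toReal_lt_toReal (lt_of_lt_of_le hPS le_top).ne ENNReal.one_ne_top).2 hPS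
  simpa using hfin

end
end

section
/- Let d ≥ 2, let F ⊆ ℝ^{d-1} be a compact convex set with (d-1)-dimensional Lebesgue measure 1, and let K ⊆ ℝ^d be a compact convex set with floor F and Vol_d(K) = 1. Let L_K(t) be the (d-1)-dimensional Lebesgue measure of K ∩ (ℝ^{d-1} × {t}). Then for every t ∈ [0, d], the volume of K below level t dominates that of a unit mountain: ∫_0^t L_K(s) ds ≥ 1 − (1 − t/d)^d. -/
open MeasureTheory Set

noncomputable section

/-!
By Brunn's principle the function `f s = L_K(s)^{1/(d-1)}` is concave on the set of heights of `K`,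
and `f 0 = 1` because the floor has unit volume. If `L_K(c) < L_M(c)` at some `c ≤ t`, concavity
keeps `f` below the linear profile `1 - s/d` of the mountain for every `s ≥ c`, so `K` has at most
as much volume above `t` as the mountain; both have total volume `1`, hence `K` has at least as
much below `t`. Otherwise `L_K ≥ L_M` on `[0, t]` and there is nothing to prove.

Brunn's principle comes from the Brunn–Minkowski inequality on slices. Its multiplicative form
is proved by induction on the dimension: the slice volumes of `A`, `B` and `(1 - t) • A + t • B`
satisfy the hypotheses of a one-dimensional Prékopa–Leindler inequality, which for quasiconcave
functions follows from the layer-cake formula and the additivity of length for Minkowski sums of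
intervals. The additive form follows by rescaling `A` and `B` to unit volume.
-/
open scoped Pointwise ENNReal

def slice (n : ℕ) (S : Set (Fin (n + 1) → ℝ)) (s : ℝ) : Set (Fin n → ℝ) :=
  {z : Fin n → ℝ | Fin.snoc z s ∈ S}

section Slice

variable {n : ℕ} {S : Set (Fin (n + 1) → ℝ)}

theorem layerVol_eq_volume_slice (s : ℝ) : layerVol n S s = (volume (slice n S s)).toReal := rfl

theorem layerVol_nonneg (s : ℝ) : 0 ≤ layerVol n S s := ENNReal.toReal_nonneg

theorem snoc_add_smul (a b : ℝ) (u v : Fin n → ℝ) (x y : ℝ) :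
    (Fin.snoc (a • u + b • v) (a * x + b * y) : Fin (n + 1) → ℝ) =
      a • Fin.snoc u x + b • Fin.snoc v y := by
  ext j
  refine Fin.lastCases ?_ (fun i => ?_) j <;> simp

theorem smul_slice_add_smul_slice_subset (S T : Set (Fin (n + 1) → ℝ)) (a b x y : ℝ) :
    a • slice n S x + b • slice n T y ⊆ slice n (a • S + b • T) (a * x + b * y) := by
  rintro _ ⟨_, ⟨u, hu, rfl⟩, _, ⟨v, hv, rfl⟩, rfl⟩
  change (Fin.snoc (a • u + b • v) (a * x + b * y) : Fin (n + 1) → ℝ) ∈ a • S + b • T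
  rw [snoc_add_smul]
  exact add_mem_add (smul_mem_smul_set hu) (smul_mem_smul_set hv)

theorem Convex.smul_slice_add_smul_slice_subset (hS : Convex ℝ S) {a b : ℝ} (ha : 0 ≤ a)
    (hb : 0 ≤ b) (hab : a + b = 1) (x y : ℝ) :
    a • slice n S x + b • slice n S y ⊆ slice n S (a * x + b * y) :=
  (_root_.smul_slice_add_smul_slice_subset S S a b x y).trans fun _ hz =>
    convex_iff_pointwise_add_subset.1 hS ha hb hab hz

theorem convex_slice (hS : Convex ℝ S) (s : ℝ) : Convex ℝ (slice n S s) :=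
  convex_iff_pointwise_add_subset.2 fun _ _ ha hb hab => by
    simpa [← add_mul, hab] using hS.smul_slice_add_smul_slice_subset ha hb hab s s

theorem isCompact_slice (hS : IsCompact S) (s : ℝ) : IsCompact (slice n S s) :=
  (Function.LeftInverse.isClosedEmbedding (f := Fin.init)
    (g := fun z : Fin n → ℝ => (Fin.snoc z s : Fin (n + 1) → ℝ))
    (fun _ => Fin.init_snoc _ _) continuous_id.finInit
    (by fun_prop)).isCompact_preimage hS

theorem slice_nonempty_iff {s : ℝ} :
    (slice n S s).Nonempty ↔ s ∈ (fun x => x (Fin.last n)) '' S :=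
  ⟨fun ⟨z, hz⟩ => ⟨_, hz, Fin.snoc_last _ _⟩, fun ⟨x, hx, hxs⟩ =>
    ⟨Fin.init x, show Fin.snoc _ _ ∈ S by rwa [← hxs, Fin.snoc_init_self]⟩⟩

theorem slice_subset_image_init (s : ℝ) : slice n S s ⊆ Fin.init '' S :=
  fun _ hz => ⟨_, hz, Fin.init_snoc _ _⟩

theorem piFinSuccAbove_last_symm_preimage (S : Set (Fin (n + 1) → ℝ)) :
    (MeasurableEquiv.piFinSuccAbove (fun _ => ℝ) (Fin.last n)).symm ⁻¹' S =
      {p : ℝ × (Fin n → ℝ) | Fin.snoc p.2 p.1 ∈ S} := by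
  ext p
  simp [MeasurableEquiv.piFinSuccAbove_symm_apply, Fin.insertNthEquiv, Fin.insertNth_last']

theorem measurableSet_snoc_mem (hS : MeasurableSet S) :
    MeasurableSet {p : ℝ × (Fin n → ℝ) | Fin.snoc p.2 p.1 ∈ S} :=
  piFinSuccAbove_last_symm_preimage S ▸
    (MeasurableEquiv.piFinSuccAbove (fun _ => ℝ) (Fin.last n)).symm.measurable hS

theorem volume_eq_lintegral_volume_slice (hS : MeasurableSet S) :
    volume S = ∫⁻ s, volume (slice n S s) := by
  rw [← (volume_preserving_piFinSuccAbove (fun _ => ℝ) (Fin.last n)).symm.measure_preimage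
    hS.nullMeasurableSet, piFinSuccAbove_last_symm_preimage, Measure.volume_eq_prod,
    Measure.prod_apply (measurableSet_snoc_mem hS)]
  rfl

theorem measurable_volume_slice (hS : MeasurableSet S) :
    Measurable fun s => volume (slice n S s) :=
  measurable_measure_prodMk_left (measurableSet_snoc_mem hS)

theorem integrable_layerVol (hS : MeasurableSet S) (hS' : volume S ≠ ∞) :
    Integrable (layerVol n S) :=
  integrable_toReal_of_lintegral_ne_top (measurable_volume_slice hS).aemeasurable
    (volume_eq_lintegral_volume_slice hS ▸ hS')

theorem integral_layerVol (hS : MeasurableSet S) (hS' : volume S ≠ ∞) :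
    ∫ s, layerVol n S s = (volume S).toReal := by
  rw [volume_eq_lintegral_volume_slice hS] at hS' ⊢
  exact integral_toReal (measurable_volume_slice hS).aemeasurable
    (ae_lt_top' (measurable_volume_slice hS).aemeasurable hS')

theorem layerVol_eq_zero_of_notMem {s : ℝ} (hs : s ∉ (fun x => x (Fin.last n)) '' S) :
    layerVol n S s = 0 := by
  rw [← slice_nonempty_iff, not_nonempty_iff_eq_empty] at hs
  rw [layerVol_eq_volume_slice, hs, measure_empty, ENNReal.toReal_zero]

theorem intervalIntegral_layerVol (hS : MeasurableSet S) (hS' : volume S ≠ ∞) {a b : ℝ}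
    (hab : a ≤ b) (hSab : ∀ x ∈ S, x (Fin.last n) ∈ Icc a b) :
    ∫ s in a..b, layerVol n S s = (volume S).toReal := by
  rw [intervalIntegral.integral_of_le hab, ← integral_Icc_eq_integral_Ioc,
    setIntegral_eq_integral_of_forall_compl_eq_zero, integral_layerVol hS hS']
  intro s hs
  refine layerVol_eq_zero_of_notMem ?_
  rintro ⟨x, hx, rfl⟩
  exact hs (hSab x hx)

theorem bddAbove_range_layerVol (hS : IsCompact S) : BddAbove (range (layerVol n S)) :=
  ⟨(volume (Fin.init '' S)).toReal, forall_mem_range.2 fun s =>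
    ENNReal.toReal_mono (hS.image continuous_id.finInit).measure_lt_top.ne
      (measure_mono (slice_subset_image_init s))⟩

theorem hasCompactSupport_layerVol (hS : IsCompact S) : HasCompactSupport (layerVol n S) :=
  HasCompactSupport.intro (hS.image (continuous_apply _)) fun _ => layerVol_eq_zero_of_notMem

end Slice

theorem Real.volume_eq_sSup_sub_sInf {S : Set ℝ} (hS : Convex ℝ S) (hne : S.Nonempty)
    (hb : Bornology.IsBounded S) : volume S = ENNReal.ofReal (sSup S - sInf S) :=
  le_antisymm ((Real.volume_le_diam S).trans_eq (Real.ediam_eq hb)) <| Real.volume_Ioo ▸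
    measure_mono ((hS.isConnected hne).Ioo_csInf_csSup_subset hb.bddBelow hb.bddAbove)

theorem Real.volume_add_of_convex {S T : Set ℝ} (hS : Convex ℝ S) (hT : Convex ℝ T)
    (hSne : S.Nonempty) (hTne : T.Nonempty) (hSb : Bornology.IsBounded S)
    (hTb : Bornology.IsBounded T) : volume (S + T) = volume S + volume T := by
  rw [volume_eq_sSup_sub_sInf hS hSne hSb, volume_eq_sSup_sub_sInf hT hTne hTb,
    volume_eq_sSup_sub_sInf (hS.add hT) (hSne.add hTne) (hSb.add hTb),
    csSup_add hSne hSb.bddAbove hTne hTb.bddAbove, csInf_add hSne hSb.bddBelow hTne hTb.bddBelow,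
    ← ENNReal.ofReal_add (sub_nonneg.2 (csInf_le_csSup hSne hSb.bddBelow hSb.bddAbove))
      (sub_nonneg.2 (csInf_le_csSup hTne hTb.bddBelow hTb.bddAbove))]
  congr 1
  ring

theorem Real.volume_smul_of_nonneg {a : ℝ} (ha : 0 ≤ a) (S : Set ℝ) :
    volume (a • S) = ENNReal.ofReal a * volume S := by
  rw [Measure.addHaar_smul_of_nonneg volume ha, Module.finrank_self, pow_one]

theorem QuasiconcaveOn.convex_nonempty_isBounded_gt {f : ℝ → ℝ} (hfq : QuasiconcaveOn ℝ univ f)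
    (hfc : HasCompactSupport f) (hf₁ : IsLUB (range f) 1) {θ : ℝ} (hθ : θ ∈ Ioo 0 1) :
    Convex ℝ {x | θ < f x} ∧ {x | θ < f x}.Nonempty ∧ Bornology.IsBounded {x | θ < f x} := by
  refine ⟨by simpa using hfq.convex_gt θ, ?_, hfc.isCompact.isBounded.subset fun x hx =>
    subset_tsupport f (hθ.1.trans hx).ne'⟩
  obtain ⟨_, ⟨x, rfl⟩, hx, -⟩ := hf₁.exists_between hθ.2
  exact ⟨x, hx⟩

theorem prekopa_leindler_add_of_quasiconcave {f g h : ℝ → ℝ} {a b : ℝ} (ha : 0 ≤ a) (hb : 0 ≤ b)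
    (hf₀ : 0 ≤ f) (hg₀ : 0 ≤ g) (hh₀ : 0 ≤ h)
    (hfi : Integrable f) (hgi : Integrable g) (hhi : Integrable h)
    (hf₁ : IsLUB (range f) 1) (hg₁ : IsLUB (range g) 1)
    (hfq : QuasiconcaveOn ℝ univ f) (hgq : QuasiconcaveOn ℝ univ g)
    (hfc : HasCompactSupport f) (hgc : HasCompactSupport g)
    (hfgh : ∀ x y, min (f x) (g y) ≤ h (a * x + b * y)) :
    a * (∫ x, f x) + b * (∫ x, g x) ≤ ∫ x, h x := by
  have superlevel : ∀ θ ∈ Ioi (0 : ℝ),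
      ENNReal.ofReal a * volume {x | θ < f x} + ENNReal.ofReal b * volume {x | θ < g x} ≤
        volume {x | θ < h x} := by
    intro θ hθ
    rcases lt_or_ge θ 1 with hθ1 | hθ1
    · obtain ⟨hSc, hSne, hSb⟩ := hfq.convex_nonempty_isBounded_gt hfc hf₁ ⟨hθ, hθ1⟩
      obtain ⟨hTc, hTne, hTb⟩ := hgq.convex_nonempty_isBounded_gt hgc hg₁ ⟨hθ, hθ1⟩
      rw [← Real.volume_smul_of_nonneg ha, ← Real.volume_smul_of_nonneg hb,
        ← Real.volume_add_of_convex (hSc.smul a) (hTc.smul b) (hSne.smul_set) (hTne.smul_set)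
          (hSb.smul₀ a) (hTb.smul₀ b)]
      refine measure_mono ?_
      rintro _ ⟨_, ⟨x, hx, rfl⟩, _, ⟨y, hy, rfl⟩, rfl⟩
      exact (lt_min hx hy).trans_le (hfgh x y)
    · have empty : ∀ u : ℝ → ℝ, IsLUB (range u) 1 → {x | θ < u x} = ∅ := fun u hu =>
        eq_empty_of_forall_notMem fun x hx => (hu.1 (mem_range_self x)).not_gt (hθ1.trans_lt hx)
      simp [empty f hf₁, empty g hg₁]
  have layerCake := fun (u : ℝ → ℝ) (hu₀ : 0 ≤ u) (hui : Integrable u) =>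
    (ofReal_integral_eq_lintegral_ofReal hui (ae_of_all _ hu₀)).trans
      (lintegral_eq_lintegral_meas_lt volume (ae_of_all _ hu₀) hui.aemeasurable)
  rw [← ENNReal.ofReal_le_ofReal_iff (integral_nonneg hh₀),
    ENNReal.ofReal_add (mul_nonneg ha (integral_nonneg (μ := volume) hf₀))
      (mul_nonneg hb (integral_nonneg (μ := volume) hg₀)),
    ENNReal.ofReal_mul ha, ENNReal.ofReal_mul hb,
    layerCake f hf₀ hfi, layerCake g hg₀ hgi, layerCake h hh₀ hhi]
  exact (add_le_add (lintegral_const_mul_le _ _) (lintegral_const_mul_le _ _)).trans <|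
    (le_lintegral_add _ _).trans <| setLIntegral_mono' measurableSet_Ioi superlevel

theorem min_le_rpow_mul_rpow {u v t : ℝ} (hu : 0 ≤ u) (hv : 0 ≤ v) (ht : t ∈ Icc 0 1) :
    min u v ≤ u ^ (1 - t) * v ^ t := by
  have hm := le_min hu hv
  calc min u v = min u v ^ (1 - t) * min u v ^ t := by
        rw [← Real.rpow_add' hm (by norm_num), sub_add_cancel, Real.rpow_one]
    _ ≤ u ^ (1 - t) * v ^ t :=
        mul_le_mul (Real.rpow_le_rpow hm (min_le_left _ _) (sub_nonneg.2 ht.2))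
          (Real.rpow_le_rpow hm (min_le_right _ _) ht.1) (by positivity) (by positivity)

theorem isLUB_range_inv_mul_sSup {u : ℝ → ℝ} (hb : BddAbove (range u)) (hu : 0 < sSup (range u)) :
    IsLUB (range fun x => (sSup (range u))⁻¹ * u x) 1 := by
  have := (isLUB_csSup (range_nonempty u) hb).mul_left (inv_nonneg.2 hu.le)
  rwa [← range_comp, inv_mul_cancel₀ hu.ne'] at this

theorem sSup_range_pos_of_integral_pos {u : ℝ → ℝ} (hb : BddAbove (range u))
    (hu : 0 < ∫ x, u x) : 0 < sSup (range u) := by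
  by_contra! h
  exact hu.not_ge (integral_nonpos fun x => (le_csSup hb (mem_range_self x)).trans h)

theorem prekopa_leindler_of_quasiconcave {f g h : ℝ → ℝ} {t : ℝ} (ht : t ∈ Ioo 0 1)
    (hf₀ : 0 ≤ f) (hg₀ : 0 ≤ g) (hh₀ : 0 ≤ h)
    (hfi : Integrable f) (hgi : Integrable g) (hhi : Integrable h)
    (hfb : BddAbove (range f)) (hgb : BddAbove (range g))
    (hfq : QuasiconcaveOn ℝ univ f) (hgq : QuasiconcaveOn ℝ univ g)
    (hfc : HasCompactSupport f) (hgc : HasCompactSupport g)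
    (hfgh : ∀ x y, f x ^ (1 - t) * g y ^ t ≤ h ((1 - t) * x + t * y)) :
    (∫ x, f x) ^ (1 - t) * (∫ x, g x) ^ t ≤ ∫ x, h x := by
  have ht' : 0 < 1 - t := sub_pos.2 ht.2
  obtain hf0 | hf := (integral_nonneg (μ := volume) hf₀).eq_or_lt
  · rw [← hf0, Real.zero_rpow ht'.ne', zero_mul]
    exact integral_nonneg hh₀
  obtain hg0 | hg := (integral_nonneg (μ := volume) hg₀).eq_or_lt
  · rw [← hg0, Real.zero_rpow ht.1.ne', mul_zero]
    exact integral_nonneg hh₀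
  -- Normalize `f` and `g` to supremum `1`, apply the additive form, and conclude by AM-GM.
  set A := sSup (range f)
  set B := sSup (range g)
  have hA : 0 < A := sSup_range_pos_of_integral_pos hfb hf
  have hB : 0 < B := sSup_range_pos_of_integral_pos hgb hg
  set M := A ^ (1 - t) * B ^ t
  have scale : ∀ X Y : ℝ, 0 ≤ X → 0 ≤ Y →
      (A⁻¹ * X) ^ (1 - t) * (B⁻¹ * Y) ^ t = M⁻¹ * (X ^ (1 - t) * Y ^ t) := by
    intro X Y hX hY
    rw [Real.mul_rpow (by positivity) hX, Real.mul_rpow (by positivity) hY,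
      Real.inv_rpow hA.le, Real.inv_rpow hB.le, mul_inv]
    ring
  have additive := prekopa_leindler_add_of_quasiconcave ht'.le ht.1.le
    (f := fun x => A⁻¹ * f x) (g := fun x => B⁻¹ * g x) (h := fun x => M⁻¹ * h x)
    (fun x => mul_nonneg (by positivity) (hf₀ x)) (fun x => mul_nonneg (by positivity) (hg₀ x))
    (fun x => mul_nonneg (by positivity) (hh₀ x))
    (hfi.const_mul _) (hgi.const_mul _) (hhi.const_mul _)
    (isLUB_range_inv_mul_sSup hfb hA) (isLUB_range_inv_mul_sSup hgb hB)
    (hfq.monotone_comp (monotone_mul_left_of_nonneg (by positivity)))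
    (hgq.monotone_comp (monotone_mul_left_of_nonneg (by positivity)))
    hfc.mul_left hgc.mul_left fun x y =>
      (min_le_rpow_mul_rpow (mul_nonneg (by positivity) (hf₀ x))
        (mul_nonneg (by positivity) (hg₀ y)) ⟨ht.1.le, ht.2.le⟩).trans <| by
        rw [scale _ _ (hf₀ x) (hg₀ y)]
        exact mul_le_mul_of_nonneg_left (hfgh x y) (by positivity)
  simp only [integral_const_mul] at additive
  have amgm := Real.geom_mean_le_arith_mean2_weighted ht'.le ht.1.le
    (mul_nonneg (inv_nonneg.2 hA.le) hf.le) (mul_nonneg (inv_nonneg.2 hB.le) hg.le) (by ring)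
  rw [scale _ _ hf.le hg.le] at amgm
  exact le_of_mul_le_mul_left (amgm.trans additive) (by positivity)

theorem quasiconcaveOn_of_rpow_mul_rpow_le {f : ℝ → ℝ} (hf₀ : 0 ≤ f)
    (hf : ∀ t ∈ Ioo (0 : ℝ) 1, ∀ x y, f x ^ (1 - t) * f y ^ t ≤ f ((1 - t) * x + t * y)) :
    QuasiconcaveOn ℝ univ f := by
  refine quasiconcaveOn_iff_min_le.2 ⟨convex_univ, fun x _ y _ a b ha hb hab => ?_⟩
  obtain rfl : a = 1 - b := by linarith
  obtain rfl | hb := hb.eq_or_lt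
  · simp
  obtain ha0 | ha := ha.eq_or_lt
  · obtain rfl : b = 1 := by linarith
    simp
  exact (min_le_rpow_mul_rpow (hf₀ x) (hf₀ y) ⟨hb.le, by linarith⟩).trans
    (hf b ⟨hb, by linarith⟩ x y)

theorem layerVol_rpow_mul_rpow_le {n : ℕ} {t : ℝ}
    (hBM : ∀ A B : Set (Fin n → ℝ), IsCompact A → IsCompact B → Convex ℝ A → Convex ℝ B →
      (volume A).toReal ^ (1 - t) * (volume B).toReal ^ t ≤ (volume ((1 - t) • A + t • B)).toReal)
    {A B : Set (Fin (n + 1) → ℝ)} (hA : IsCompact A) (hB : IsCompact B) (hAc : Convex ℝ A)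
    (hBc : Convex ℝ B) (x y : ℝ) :
    layerVol n A x ^ (1 - t) * layerVol n B y ^ t ≤
      layerVol n ((1 - t) • A + t • B) ((1 - t) * x + t * y) :=
  (hBM _ _ (isCompact_slice hA x) (isCompact_slice hB y) (convex_slice hAc x)
    (convex_slice hBc y)).trans <|
    ENNReal.toReal_mono (isCompact_slice ((hA.smul _).add (hB.smul _)) _).measure_lt_top.ne
      (measure_mono (smul_slice_add_smul_slice_subset A B _ _ x y))

theorem brunn_minkowski_mul : ∀ {n : ℕ} {A B : Set (Fin n → ℝ)}, IsCompact A → IsCompact B →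
    Convex ℝ A → Convex ℝ B → ∀ {t : ℝ}, t ∈ Ioo 0 1 →
    (volume A).toReal ^ (1 - t) * (volume B).toReal ^ t ≤ (volume ((1 - t) • A + t • B)).toReal
  | 0, A, B, _, _, _, _, t, ht => by
    obtain rfl | hA := A.eq_empty_or_nonempty
    · simp [Real.zero_rpow (sub_pos.2 ht.2).ne']
    obtain rfl | hB := B.eq_empty_or_nonempty
    · simp [Real.zero_rpow ht.1.ne']
    have volume_of_nonempty : ∀ S : Set (Fin 0 → ℝ), S.Nonempty → (volume S).toReal = 1 :=
      fun S hS => by simp [Subsingleton.eq_univ_of_nonempty hS, volume_pi]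
    rw [volume_of_nonempty A hA, volume_of_nonempty B hB,
      volume_of_nonempty _ (hA.smul_set.add hB.smul_set)]
    simp
  | n + 1, A, B, hA, hB, hAc, hBc, t, ht => by
    have hC : IsCompact ((1 - t) • A + t • B) := (hA.smul _).add (hB.smul _)
    have quasiconcave : ∀ {S : Set (Fin (n + 1) → ℝ)}, IsCompact S → Convex ℝ S →
        QuasiconcaveOn ℝ univ (layerVol n S) := fun hS hSc =>
      quasiconcaveOn_of_rpow_mul_rpow_le layerVol_nonneg fun s hs x y => by
        have := layerVol_rpow_mul_rpow_le (fun A B hA hB hAc hBc =>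
          brunn_minkowski_mul hA hB hAc hBc hs) hS hS hSc hSc x y
        rwa [← hSc.add_smul (sub_nonneg.2 hs.2.le) hs.1.le, sub_add_cancel, one_smul] at this
    rw [← integral_layerVol hA.measurableSet hA.measure_lt_top.ne,
      ← integral_layerVol hB.measurableSet hB.measure_lt_top.ne,
      ← integral_layerVol hC.measurableSet hC.measure_lt_top.ne]
    exact prekopa_leindler_of_quasiconcave ht layerVol_nonneg layerVol_nonneg layerVol_nonneg
      (integrable_layerVol hA.measurableSet hA.measure_lt_top.ne)
      (integrable_layerVol hB.measurableSet hB.measure_lt_top.ne)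
      (integrable_layerVol hC.measurableSet hC.measure_lt_top.ne)
      (bddAbove_range_layerVol hA) (bddAbove_range_layerVol hB)
      (quasiconcave hA hAc) (quasiconcave hB hBc)
      (hasCompactSupport_layerVol hA) (hasCompactSupport_layerVol hB)
      (layerVol_rpow_mul_rpow_le (fun A B hA hB hAc hBc => brunn_minkowski_mul hA hB hAc hBc ht)
        hA hB hAc hBc)

theorem measure_le_measure_add {G : Type*} [AddGroup G] [MeasurableSpace G] [MeasurableAdd G]
    (μ : Measure G) [μ.IsAddLeftInvariant] {A : Set G} (hA : A.Nonempty) (B : Set G) :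
    μ B ≤ μ (A + B) :=
  let ⟨_, ha⟩ := hA
  (measure_vadd μ _ B).symm.trans_le (measure_mono (vadd_set_subset_add ha))

section BrunnMinkowski

variable {n : ℕ}

theorem toReal_volume_smul {a : ℝ} (ha : 0 ≤ a) (S : Set (Fin n → ℝ)) :
    (volume (a • S)).toReal = a ^ n * (volume S).toReal := by
  rw [Measure.addHaar_smul_of_nonneg volume ha, Module.finrank_fin_fun, ENNReal.toReal_mul,
    ENNReal.toReal_ofReal (by positivity)]

theorem toReal_volume_smul_rpow_inv (hn : n ≠ 0) {a : ℝ} (ha : 0 ≤ a) (S : Set (Fin n → ℝ)) :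
    (volume (a • S)).toReal ^ (n⁻¹ : ℝ) = a * (volume S).toReal ^ (n⁻¹ : ℝ) := by
  rw [toReal_volume_smul ha, Real.mul_rpow (by positivity) ENNReal.toReal_nonneg,
    Real.pow_rpow_inv_natCast ha hn]

theorem toReal_volume_inv_rpow_smul (hn : n ≠ 0) {S : Set (Fin n → ℝ)}
    (hS : (volume S).toReal ≠ 0) :
    (volume (((volume S).toReal ^ (n⁻¹ : ℝ))⁻¹ • S)).toReal = 1 := by
  rw [toReal_volume_smul (by positivity), inv_pow,
    Real.rpow_inv_natCast_pow ENNReal.toReal_nonneg hn, inv_mul_cancel₀ hS]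

theorem brunn_minkowski (hn : n ≠ 0) {A B : Set (Fin n → ℝ)} (hA : IsCompact A) (hB : IsCompact B)
    (hAc : Convex ℝ A) (hBc : Convex ℝ B) (hAne : A.Nonempty) (hBne : B.Nonempty) {a b : ℝ}
    (ha : 0 ≤ a) (hb : 0 ≤ b) :
    a * (volume A).toReal ^ (n⁻¹ : ℝ) + b * (volume B).toReal ^ (n⁻¹ : ℝ) ≤
      (volume (a • A + b • B)).toReal ^ (n⁻¹ : ℝ) := by
  have hfin : volume (a • A + b • B) ≠ ∞ := ((hA.smul a).add (hB.smul b)).measure_lt_top.ne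
  set α := (volume A).toReal ^ (n⁻¹ : ℝ)
  set β := (volume B).toReal ^ (n⁻¹ : ℝ)
  have hα : 0 ≤ α := by positivity
  have hβ : 0 ≤ β := by positivity
  obtain hA0 | hA0 := (mul_nonneg ha hα).eq_or_lt
  · rw [← hA0, zero_add, ← toReal_volume_smul_rpow_inv hn hb]
    exact Real.rpow_le_rpow ENNReal.toReal_nonneg
      (ENNReal.toReal_mono hfin (measure_le_measure_add _ hAne.smul_set _)) (by positivity)
  obtain hB0 | hB0 := (mul_nonneg hb hβ).eq_or_lt
  · rw [← hB0, add_zero, ← toReal_volume_smul_rpow_inv hn ha, add_comm (a • A)]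
    exact Real.rpow_le_rpow ENNReal.toReal_nonneg
      (ENNReal.toReal_mono (add_comm (a • A) _ ▸ hfin) (measure_le_measure_add _ hBne.smul_set _))
      (by positivity)
  have ha' : 0 < a := pos_of_mul_pos_left hA0 hα
  have hα' : 0 < α := pos_of_mul_pos_right hA0 ha
  have hb' : 0 < b := pos_of_mul_pos_left hB0 hβ
  have hβ' : 0 < β := pos_of_mul_pos_right hB0 hb
  set γ := a * α + b * β with hγ_def
  have hγ : 0 < γ := by positivity
  set t := b * β / γ with ht_def
  have ht : t ∈ Ioo 0 1 := ⟨by positivity, (div_lt_one hγ).2 (by linarith)⟩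
  have h1t : 1 - t = a * α / γ := by
    rw [ht_def, eq_div_iff hγ.ne', sub_mul, div_mul_cancel₀ _ hγ.ne']
    linarith
  -- Rescale `A` and `B` to unit volume and apply the multiplicative form with weight `t`.
  have hC := brunn_minkowski_mul (hA.smul α⁻¹) (hB.smul β⁻¹) (hAc.smul _) (hBc.smul _) ht
  have hn' : (n⁻¹ : ℝ) ≠ 0 := inv_ne_zero (Nat.cast_ne_zero.2 hn)
  rw [toReal_volume_inv_rpow_smul hn ((Real.rpow_ne_zero ENNReal.toReal_nonneg hn').1 hα'.ne'),
    toReal_volume_inv_rpow_smul hn ((Real.rpow_ne_zero ENNReal.toReal_nonneg hn').1 hβ'.ne'),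
    Real.one_rpow, Real.one_rpow, one_mul] at hC
  have hset : a • A + b • B = γ • ((1 - t) • α⁻¹ • A + t • β⁻¹ • B) := by
    rw [smul_add, smul_smul, smul_smul, smul_smul, smul_smul, h1t, ht_def]
    congr 2 <;> field_simp
  rw [hset, toReal_volume_smul_rpow_inv hn hγ.le]
  exact le_mul_of_one_le_right hγ.le (Real.one_le_rpow hC (by positivity))

end BrunnMinkowski

theorem concaveOn_layerVol_rpow {n : ℕ} (hn : n ≠ 0) {K : Set (Fin (n + 1) → ℝ)}
    (hK : IsCompact K) (hKc : Convex ℝ K) :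
    ConcaveOn ℝ ((fun x => x (Fin.last n)) '' K) fun s => layerVol n K s ^ (n⁻¹ : ℝ) := by
  refine ⟨hKc.linear_image (LinearMap.proj (Fin.last n)), fun x hx y hy a b ha hb hab => ?_⟩
  rw [← slice_nonempty_iff] at hx hy
  calc a • layerVol n K x ^ (n⁻¹ : ℝ) + b • layerVol n K y ^ (n⁻¹ : ℝ)
      ≤ (volume (a • slice n K x + b • slice n K y)).toReal ^ (n⁻¹ : ℝ) :=
        brunn_minkowski hn (isCompact_slice hK x) (isCompact_slice hK y) (convex_slice hKc x)
          (convex_slice hKc y) hx hy ha hb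
    _ ≤ layerVol n K (a • x + b • y) ^ (n⁻¹ : ℝ) :=
        Real.rpow_le_rpow ENNReal.toReal_nonneg
          (ENNReal.toReal_mono (isCompact_slice hK _).measure_lt_top.ne
            (measure_mono (hKc.smul_slice_add_smul_slice_subset ha hb hab x y)))
          (by positivity)

theorem ConcaveOn.lt_of_lt_line {f : ℝ → ℝ} {P : Set ℝ} (hf : ConcaveOn ℝ P f) {a c s k : ℝ}
    (ha : a ∈ P) (hc : c ∈ P) (hs : s ∈ P) (hac : a < c) (hcs : c ≤ s)
    (hfc : f c < f a + k * (c - a)) : f s < f a + k * (s - a) := by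
  have secant := hf.neg.secant_mono ha hc hs hac.ne' (hac.trans_le hcs).ne' hcs
  simp only [Pi.neg_apply] at secant
  rw [div_le_div_iff₀ (sub_pos.2 hac) (sub_pos.2 (hac.trans_le hcs))] at secant
  nlinarith [sub_pos.2 hac, sub_pos.2 (hac.trans_le hcs)]

theorem intervalIntegral_le_of_crossing {f g : ℝ → ℝ} {a t b : ℝ} (hat : a ≤ t) (htb : t ≤ b)
    (hf : IntervalIntegrable f volume a b) (hg : IntervalIntegrable g volume a b)
    (htot : ∫ x in a..b, g x ≤ ∫ x in a..b, f x)
    (hcross : ∀ c ∈ Icc a t, f c < g c → ∀ x ∈ Icc t b, f x ≤ g x) :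
    ∫ x in a..t, g x ≤ ∫ x in a..t, f x := by
  have sub : ∀ {u : ℝ → ℝ}, IntervalIntegrable u volume a b →
      IntervalIntegrable u volume a t ∧ IntervalIntegrable u volume t b := fun hu =>
    ⟨hu.mono_set (uIcc_subset_uIcc_left (by simp [uIcc_of_le (hat.trans htb), hat, htb])),
      hu.mono_set (uIcc_subset_uIcc_right (by simp [uIcc_of_le (hat.trans htb), hat, htb]))⟩
  by_cases hle : ∀ c ∈ Icc a t, g c ≤ f c
  · exact intervalIntegral.integral_mono_on hat (sub hg).1 (sub hf).1 hle
  push Not at hle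
  obtain ⟨c, hc, hfg⟩ := hle
  have tail := intervalIntegral.integral_mono_on htb (sub hf).2 (sub hg).2 (hcross c hc hfg)
  rw [← intervalIntegral.integral_add_adjacent_intervals (sub hf).1 (sub hf).2,
    ← intervalIntegral.integral_add_adjacent_intervals (sub hg).1 (sub hg).2] at htot
  linarith

theorem HasFloor.slice_zero {m : ℕ} {F : Set (Fin m → ℝ)} {K : Set (Fin (m + 1) → ℝ)}
    (h : HasFloor m F K) : slice m K 0 = F := by
  ext z
  have hz : (Fin.snoc z 0 : Fin (m + 1) → ℝ) (Fin.last m) = 0 := Fin.snoc_last _ _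
  change Fin.snoc z 0 ∈ K ↔ z ∈ F
  refine (and_iff_left hz).symm.trans ?_
  change _ ∈ K ∩ {x | x (Fin.last m) = 0} ↔ _
  rw [h.2]
  exact (Fin.snoc_left_injective (α := fun _ => ℝ) 0).mem_set_image

/-- The layer area `L_M(s) = (1 - s/d)^(d-1)` of a unit mountain in dimension `d = m + 1`,
continued by `0` above its apex. -/
def mountainLayer (m : ℕ) (s : ℝ) : ℝ :=
  max (1 - s / (m + 1)) 0 ^ m

theorem continuous_mountainLayer (m : ℕ) : Continuous (mountainLayer m) := by
  unfold mountainLayer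
  fun_prop

theorem integral_mountainLayer {m : ℕ} {t : ℝ} (ht : t ∈ Icc 0 ((m : ℝ) + 1)) :
    ∫ s in (0 : ℝ)..t, mountainLayer m s = 1 - (1 - t / (m + 1)) ^ (m + 1) := by
  have hd : (0 : ℝ) < m + 1 := by positivity
  have hderiv : ∀ s ∈ uIcc 0 t,
      HasDerivAt (fun s : ℝ => -(1 - s / (m + 1)) ^ (m + 1)) ((1 - s / (m + 1)) ^ m) s := by
    intro s _
    refine ((((hasDerivAt_id s).div_const ((m : ℝ) + 1)).const_sub 1).pow (m + 1)).neg
      |>.congr_deriv ?_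
    simp only [id, Nat.add_sub_cancel]
    push_cast
    field_simp
  rw [intervalIntegral.integral_congr (g := fun s => (1 - s / (m + 1)) ^ m),
    intervalIntegral.integral_eq_sub_of_hasDerivAt hderiv
      (Continuous.intervalIntegrable (by fun_prop) _ _)]
  · simp only [zero_div, sub_zero, one_pow]
    ring
  · intro s hs
    rw [uIcc_of_le ht.1] at hs
    simp only [mountainLayer]
    rw [max_eq_left (sub_nonneg.2 ((div_le_one hd).2 (hs.2.trans ht.2)))]

theorem integral_mountainLayer_of_le {m : ℕ} (hm : m ≠ 0) {b : ℝ} (hb : (m : ℝ) + 1 ≤ b) :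
    ∫ s in (0 : ℝ)..b, mountainLayer m s = 1 := by
  have hd : (0 : ℝ) < m + 1 := by positivity
  rw [← intervalIntegral.integral_add_adjacent_intervals
      ((continuous_mountainLayer m).intervalIntegrable 0 (m + 1))
      ((continuous_mountainLayer m).intervalIntegrable _ b),
    integral_mountainLayer ⟨hd.le, le_rfl⟩, intervalIntegral.integral_congr (g := 0)]
  · simp [div_self hd.ne']
  · intro s hs
    rw [uIcc_of_le hb] at hs
    simp only [mountainLayer, Pi.zero_apply]
    rw [max_eq_right (sub_nonpos.2 ((le_div_iff₀ hd).2 (by linarith [hs.1]))), zero_pow hm]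

theorem layerVol_le_mountainLayer {m : ℕ} (hm : m ≠ 0) {F : Set (Fin m → ℝ)}
    {K : Set (Fin (m + 1) → ℝ)} (hK : IsCompact K) (hKc : Convex ℝ K) (hKF : HasFloor m F K)
    (hF : volume F = 1) {c s : ℝ} (hc0 : 0 ≤ c) (hc : layerVol m K c < mountainLayer m c)
    (hcs : c ≤ s) : layerVol m K s ≤ mountainLayer m s := by
  set P := (fun x => x (Fin.last m)) '' K
  have hM : ∀ s : ℝ, 0 ≤ max (1 - s / (m + 1)) 0 := fun s => le_max_right _ _
  rcases (em (s ∈ P)).symm with hsP | hsP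
  · rw [layerVol_eq_zero_of_notMem hsP]
    exact pow_nonneg (hM s) m
  have hL0 : layerVol m K 0 = 1 := by
    rw [layerVol_eq_volume_slice, hKF.slice_zero, hF, ENNReal.toReal_one]
  have h0P : (0 : ℝ) ∈ P := slice_nonempty_iff.1 <| hKF.slice_zero ▸
    nonempty_of_measure_ne_zero (hF ▸ one_ne_zero)
  have hc0' : 0 < c := hc0.lt_of_ne <| by
    rintro rfl
    simp [hL0, mountainLayer] at hc
  have hcP : c ∈ P := ((hKc.linear_image (LinearMap.proj (Fin.last m))).ordConnected).out
    h0P hsP ⟨hc0, hcs⟩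
  have hm' : (0 : ℝ) < m := by positivity
  have hf : ∀ s, 0 ≤ layerVol m K s ^ (m⁻¹ : ℝ) := fun s => Real.rpow_nonneg (layerVol_nonneg _) _
  have hfc : layerVol m K c ^ (m⁻¹ : ℝ) < max (1 - c / (m + 1)) 0 := by
    rwa [Real.rpow_inv_lt_iff_of_pos (layerVol_nonneg _) (hM c) hm', Real.rpow_natCast]
  have slope : ∀ x : ℝ, -(1 / (m + 1)) * x = -(x / (m + 1)) := fun x => by ring
  have hfs := (concaveOn_layerVol_rpow hm hK hKc).lt_of_lt_line (k := -(1 / (m + 1))) h0P hcP hsP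
    hc0' hcs (by
      rw [hL0, Real.one_rpow, sub_zero, slope, ← sub_eq_add_neg]
      exact (lt_max_iff.1 hfc).resolve_right (hf c).not_gt)
  rw [hL0, Real.one_rpow, sub_zero, slope, ← sub_eq_add_neg] at hfs
  calc layerVol m K s = (layerVol m K s ^ (m⁻¹ : ℝ)) ^ m :=
        (Real.rpow_inv_natCast_pow (layerVol_nonneg _) hm).symm
    _ ≤ mountainLayer m s :=
        pow_le_pow_left₀ (hf s) (hfs.le.trans (le_max_left _ _)) m

theorem stmt8_general (m : ℕ) (hm : 1 ≤ m) (F : Set (Fin m → ℝ))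
    (hFvol : volume F = 1)
    (K : Set (Fin (m + 1) → ℝ)) (hKcomp : IsCompact K) (hKconv : Convex ℝ K)
    (hKfloor : HasFloor m F K) (hKvol : volume K = 1)
    (t : ℝ) (ht : t ∈ Set.Icc (0 : ℝ) ((m : ℝ) + 1)) :
    1 - (1 - t / ((m : ℝ) + 1)) ^ (m + 1) ≤ ∫ s in (0 : ℝ)..t, layerVol m K s := by
  have hm0 : m ≠ 0 := Nat.one_le_iff_ne_zero.1 hm
  obtain ⟨b, hb, hKb⟩ : ∃ b, (m : ℝ) + 1 ≤ b ∧ ∀ x ∈ K, x (Fin.last m) ≤ b := by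
    obtain ⟨b, hb⟩ := hKcomp.bddAbove_image (continuous_apply (Fin.last m)).continuousOn
    exact ⟨max b (m + 1), le_max_right _ _,
      fun x hx => (hb (mem_image_of_mem _ hx)).trans (le_max_left _ _)⟩
  have hL : ∫ s in (0 : ℝ)..b, layerVol m K s = 1 := by
    rw [intervalIntegral_layerVol hKcomp.measurableSet hKcomp.measure_lt_top.ne
      (ht.1.trans (ht.2.trans hb)) fun x hx => ⟨hKfloor.1 hx, hKb x hx⟩, hKvol, ENNReal.toReal_one]
  rw [← integral_mountainLayer ht]
  refine intervalIntegral_le_of_crossing ht.1 (ht.2.trans hb)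
    (integrable_layerVol hKcomp.measurableSet hKcomp.measure_lt_top.ne).intervalIntegrable
    ((continuous_mountainLayer m).intervalIntegrable _ _)
    (by rw [hL, integral_mountainLayer_of_le hm0 hb]) fun c hc hlt s hs => ?_
  exact layerVol_le_mountainLayer hm0 hKcomp hKconv hKfloor hFvol hc.1 hlt (hc.2.trans hs.1)

/-- The volume of `K` below level `t` dominates that of a unit mountain:
for `t ∈ [0, d]`, `∫_0^t L_K(s) ds ≥ 1 - (1 - t/d)^d` (here `d = m + 1`). -/
theorem stmt8 (m : ℕ) (hm : 1 ≤ m) (F : Set (Fin m → ℝ))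
    (hFcomp : IsCompact F) (hFconv : Convex ℝ F) (hFvol : volume F = 1)
    (K : Set (Fin (m + 1) → ℝ)) (hKcomp : IsCompact K) (hKconv : Convex ℝ K)
    (hKfloor : HasFloor m F K) (hKvol : volume K = 1)
    (t : ℝ) (ht : t ∈ Set.Icc (0 : ℝ) ((m : ℝ) + 1)) :
    1 - (1 - t / ((m : ℝ) + 1)) ^ (m + 1) ≤ ∫ s in (0 : ℝ)..t, layerVol m K s :=
  stmt8_general m hm F hFvol K hKcomp hKconv hKfloor hKvol t ht

end
end

section
/- Let G : [0,1] → [0,∞) be a concave function with ∫_0^1 G(x) dx = 1. Then ∫_0^1 G(x)² dx ≤ 4/3, with 4/3 = ∫_0^1 (2x)² dx being the value attained by the linear function G(x) = 2x. -/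
/-!
Let `M = max G` on `[a, b]` and `h(y) = (3y - M)(y - M) = 3 (y - 2M/3)² - M²/3`, so that
`h(y) ≤ h(z)` whenever `y` lies between `2M/3` and `z`. The integral of `h` along a linear ramp
from `0` to `M` vanishes, and `h(M) = 0`. On each side of the maximum, concavity traps `G` between
the level `2M/3` and the ramp from the end of the interval through the point where `G` crosses
`2M/3`; this ramp reaches `M` before the maximum, and beyond that point `2M/3 ≤ G ≤ M`. Hence
`∫ h(G) ≤ 0`, that is `3 ∫ G² ≤ 4M ∫ G - M² (b - a) ≤ 4 (∫ G)² / (b - a)`.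
A concave function may jump down at the endpoints, so this continuous case is applied on
`[a + ε, b - ε]` and `ε → 0`.
-/

open Set MeasureTheory intervalIntegral

theorem ConcaveOn.chord_le {s : Set ℝ} {f : ℝ → ℝ} (hf : ConcaveOn ℝ s f) {x y z : ℝ}
    (hx : x ∈ s) (hz : z ∈ s) (hy : y ∈ Icc x z) :
    (z - y) * f x + (y - x) * f z ≤ (z - x) * f y := by
  rcases hy.1.eq_or_lt with rfl | hxy
  · linarith
  rcases hy.2.eq_or_lt with rfl | hyz
  · linarith
  have := hf.neg.secant_mono_aux1 hx hz hxy hyz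
  simp only [Pi.neg_apply] at this
  linarith

theorem mul_sub_le_mul_sub_of_mem_uIcc {M y z : ℝ} (h : y ∈ uIcc (2 * M / 3) z) :
    (3 * y - M) * (y - M) ≤ (3 * z - M) * (z - M) := by
  rcases mem_uIcc.1 h with ⟨h₁, h₂⟩ | ⟨h₁, h₂⟩ <;> nlinarith

theorem integral_three_mul_sub_mul_sub_nonpos {f : ℝ → ℝ} {u v M : ℝ} (huv : u ≤ v)
    (h : ∀ x ∈ Icc u v, M / 3 ≤ f x ∧ f x ≤ M) :
    ∫ x in u..v, (3 * f x - M) * (f x - M) ≤ 0 := by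
  have := integral_nonneg (f := fun x => -((3 * f x - M) * (f x - M))) (μ := volume) huv
    fun x hx => neg_nonneg.2 <|
      mul_nonpos_of_nonneg_of_nonpos (by linarith [h x hx]) (by linarith [h x hx])
  rw [intervalIntegral.integral_neg] at this
  linarith

theorem integral_three_mul_sub_mul_sub {f : ℝ → ℝ} {a b : ℝ} (M : ℝ)
    (hf : IntervalIntegrable f volume a b)
    (hf2 : IntervalIntegrable (fun x => f x ^ 2) volume a b) :
    ∫ x in a..b, (3 * f x - M) * (f x - M) =
      3 * (∫ x in a..b, f x ^ 2) - 4 * M * (∫ x in a..b, f x) + M ^ 2 * (b - a) := by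
  have hexpand : ∀ x, (3 * f x - M) * (f x - M) = 3 * f x ^ 2 - 4 * M * f x + M ^ 2 :=
    fun x => by ring
  simp only [hexpand]
  rw [integral_add ((hf2.const_mul 3).sub (hf.const_mul _)) intervalIntegrable_const,
    integral_sub (hf2.const_mul 3) (hf.const_mul _), intervalIntegral.integral_const_mul,
    intervalIntegral.integral_const_mul, intervalIntegral.integral_const, smul_eq_mul]
  ring

theorem integral_three_mul_sub_mul_sub_ramp (p x₁ M : ℝ) :
    ∫ x in p..p + 3 * (x₁ - p) / 2,
      (3 * (2 * M / 3 * (x - p) / (x₁ - p)) - M) *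
        (2 * M / 3 * (x - p) / (x₁ - p) - M) = 0 := by
  set k := 2 * M / 3 / (x₁ - p)
  have hderiv : ∀ x, HasDerivAt (fun x => (x - p) * (k * (x - p) - M) ^ 2)
      ((3 * (2 * M / 3 * (x - p) / (x₁ - p)) - M) *
        (2 * M / 3 * (x - p) / (x₁ - p) - M)) x := by
    intro x
    have h1 := (hasDerivAt_id' x).sub_const p
    refine (h1.mul ((h1.const_mul k).sub_const M |>.fun_pow 2)).congr_deriv ?_
    push_cast
    ring
  rw [integral_eq_sub_of_hasDerivAt (fun x _ => hderiv x)
    (Continuous.intervalIntegrable (by fun_prop) _ _)]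
  rcases eq_or_ne x₁ p with rfl | hx₁
  · simp
  have : x₁ - p ≠ 0 := sub_ne_zero.2 hx₁
  simp only [k]
  field_simp
  ring

section Ramp

variable {f : ℝ → ℝ} {p q x₁ x : ℝ}

theorem ConcaveOn.ramp_le (hf : ConcaveOn ℝ (Icc p q) f) (hp : 0 ≤ f p)
    (hx₁ : x₁ ∈ Ioc p q) (hx : x ∈ Icc p x₁) : f x₁ * (x - p) / (x₁ - p) ≤ f x := by
  have := hf.chord_le (left_mem_Icc.2 (hx₁.1.le.trans hx₁.2)) (Ioc_subset_Icc_self hx₁) hx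
  rw [div_le_iff₀ (sub_pos.2 hx₁.1)]
  nlinarith [hx.2]

theorem ConcaveOn.le_ramp (hf : ConcaveOn ℝ (Icc p q) f) (hp : 0 ≤ f p)
    (hx₁ : x₁ ∈ Ioc p q) (hx : x ∈ Icc x₁ q) : f x ≤ f x₁ * (x - p) / (x₁ - p) := by
  have := hf.chord_le (left_mem_Icc.2 (hx₁.1.le.trans hx₁.2)) ⟨hx₁.1.le.trans hx.1, hx.2⟩
    ⟨hx₁.1.le, hx.1⟩
  rw [le_div_iff₀ (sub_pos.2 hx₁.1)]
  nlinarith [hx.1]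

theorem ConcaveOn.le_of_lt_right (hf : ConcaveOn ℝ (Icc p q) f) (hx₁ : x₁ ∈ Icc p q)
    (hlt : f x₁ < f q) (hx : x ∈ Icc p x₁) : f x ≤ f x₁ := by
  have := hf.min_le_of_mem_Icc ⟨hx.1, hx.2.trans hx₁.2⟩
    (right_mem_Icc.2 (hx₁.1.trans hx₁.2)) ⟨hx.2, hx₁.2⟩
  exact (min_le_iff.1 this).resolve_right hlt.not_ge

theorem ConcaveOn.mem_uIcc_ramp (hf : ConcaveOn ℝ (Icc p q) f) (hp : 0 ≤ f p)
    (hx₁ : x₁ ∈ Ioc p q) (hlt : f x₁ < f q) (hx : x ∈ Icc p q) :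
    f x ∈ uIcc (f x₁) (f x₁ * (x - p) / (x₁ - p)) := by
  rcases le_total x x₁ with h | h
  · exact mem_uIcc.2 <| Or.inr ⟨hf.ramp_le hp hx₁ ⟨hx.1, h⟩,
      hf.le_of_lt_right (Ioc_subset_Icc_self hx₁) hlt ⟨hx.1, h⟩⟩
  · refine mem_uIcc.2 <| Or.inl ⟨?_, hf.le_ramp hp hx₁ ⟨h, hx.2⟩⟩
    exact (le_min le_rfl hlt.le).trans (hf.min_le_of_mem_Icc (Ioc_subset_Icc_self hx₁)
      (right_mem_Icc.2 (hx₁.1.le.trans hx₁.2)) ⟨h, hx.2⟩)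

end Ramp

theorem ConcaveOn.integral_three_mul_sub_mul_sub_nonpos_of_isMaxOn_right {f : ℝ → ℝ}
    {p q : ℝ} (hpq : p ≤ q) (hf : ConcaveOn ℝ (Icc p q) f) (hfc : ContinuousOn f (Icc p q))
    (hp : 0 ≤ f p) (hmax : IsMaxOn f (Icc p q) q) :
    ∫ x in p..q, (3 * f x - f q) * (f x - f q) ≤ 0 := by
  set M := f q
  have hpI : p ∈ Icc p q := left_mem_Icc.2 hpq
  have hqI : q ∈ Icc p q := right_mem_Icc.2 hpq
  have hM : 0 ≤ M := hp.trans (hmax hpI)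
  by_cases hpM : 2 * M / 3 ≤ f p
  · exact integral_three_mul_sub_mul_sub_nonpos hpq fun x hx =>
      ⟨(le_min (by linarith) (by linarith)).trans (hf.min_le_of_mem_Icc hpI hqI hx), hmax hx⟩
  push Not at hpM
  obtain ⟨x₁, hx₁, hfx₁⟩ := intermediate_value_Icc hpq hfc ⟨hpM.le, by linarith⟩
  have hpx₁ : p < x₁ := hx₁.1.lt_of_ne (by rintro rfl; linarith)
  have hlt : f x₁ < M := by linarith
  -- the ramp from `(p, 0)` through `(x₁, 2M/3)` reaches `M` at `r`
  set r := p + 3 * (x₁ - p) / 2 with hr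
  have hpr : p ≤ r := by linarith
  have hrq : r ≤ q := by
    have := hf.le_ramp hp ⟨hpx₁, hx₁.2⟩ ⟨hx₁.2, le_rfl⟩
    rw [hfx₁, le_div_iff₀ (by linarith)] at this
    nlinarith
  have hcont : ContinuousOn (fun x => (3 * f x - M) * (f x - M)) (Icc p q) := by fun_prop
  have hipr := (hcont.mono (Icc_subset_Icc le_rfl hrq)).intervalIntegrable_of_Icc (μ := volume) hpr
  calc ∫ x in p..q, (3 * f x - M) * (f x - M)
      = (∫ x in p..r, (3 * f x - M) * (f x - M)) + ∫ x in r..q, (3 * f x - M) * (f x - M) :=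
        (integral_add_adjacent_intervals hipr
          ((hcont.mono (Icc_subset_Icc hpr le_rfl)).intervalIntegrable_of_Icc hrq)).symm
    _ ≤ (∫ x in p..r, (3 * (2 * M / 3 * (x - p) / (x₁ - p)) - M) *
          (2 * M / 3 * (x - p) / (x₁ - p) - M)) + 0 := by
      refine add_le_add (integral_mono_on hpr hipr
        (Continuous.intervalIntegrable (by fun_prop) _ _) fun x hx => ?_)
        (integral_three_mul_sub_mul_sub_nonpos hrq fun x hx =>
          ⟨?_, hmax ⟨by linarith [hx.1], hx.2⟩⟩)
      · have := hf.mem_uIcc_ramp hp ⟨hpx₁, hx₁.2⟩ hlt ⟨hx.1, hx.2.trans hrq⟩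
        rw [hfx₁] at this
        exact mul_sub_le_mul_sub_of_mem_uIcc this
      · have := hf.min_le_of_mem_Icc hx₁ hqI ⟨by linarith [hx.1], hx.2⟩
        rw [min_eq_left hlt.le] at this
        linarith
    _ = 0 := by rw [integral_three_mul_sub_mul_sub_ramp, add_zero]

theorem ConcaveOn.integral_three_mul_sub_mul_sub_nonpos_of_isMaxOn_left {f : ℝ → ℝ}
    {p q : ℝ} (hpq : p ≤ q) (hf : ConcaveOn ℝ (Icc p q) f) (hfc : ContinuousOn f (Icc p q))
    (hq : 0 ≤ f q) (hmax : IsMaxOn f (Icc p q) p) :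
    ∫ x in p..q, (3 * f x - f p) * (f x - f p) ≤ 0 := by
  have hrefl : MapsTo (fun x => p + q - x) (Icc p q) (Icc p q) :=
    fun x hx => ⟨by linarith [hx.2], by linarith [hx.1]⟩
  have hg : ConcaveOn ℝ (Icc p q) (fun x => f (p + q - x)) :=
    (hf.comp_affineMap (AffineMap.const ℝ ℝ (p + q) - AffineMap.id ℝ ℝ)).subset hrefl
      (convex_Icc p q)
  have h := hg.integral_three_mul_sub_mul_sub_nonpos_of_isMaxOn_right hpq
    (hfc.comp (continuousOn_const.sub continuousOn_id) hrefl) (by simpa using hq)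
    (fun x hx => by simpa using hmax (hrefl hx))
  simp only [add_sub_cancel_right] at h
  rwa [integral_comp_sub_left (fun x => (3 * f x - f p) * (f x - f p)), add_sub_cancel_right,
    add_sub_cancel_left] at h

theorem ConcaveOn.three_mul_integral_sq_le_of_continuousOn {G : ℝ → ℝ} {a b : ℝ}
    (hab : a ≤ b) (hG : ConcaveOn ℝ (Icc a b) G) (hGc : ContinuousOn G (Icc a b))
    (ha : 0 ≤ G a) (hb : 0 ≤ G b) :
    3 * (b - a) * ∫ x in a..b, G x ^ 2 ≤ 4 * (∫ x in a..b, G x) ^ 2 := by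
  obtain ⟨c, hc, hmax⟩ := isCompact_Icc.exists_isMaxOn (nonempty_Icc.2 hab) hGc
  have hac : Icc a c ⊆ Icc a b := Icc_subset_Icc le_rfl hc.2
  have hcb : Icc c b ⊆ Icc a b := Icc_subset_Icc hc.1 le_rfl
  have hleft := integral_three_mul_sub_mul_sub_nonpos_of_isMaxOn_right hc.1
    (hG.subset hac (convex_Icc a c)) (hGc.mono hac) ha (hmax.on_subset hac)
  have hright := integral_three_mul_sub_mul_sub_nonpos_of_isMaxOn_left hc.2
    (hG.subset hcb (convex_Icc c b)) (hGc.mono hcb) hb (hmax.on_subset hcb)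
  have hh : ContinuousOn (fun x => (3 * G x - G c) * (G x - G c)) (Icc a b) := by fun_prop
  have hnonpos : ∫ x in a..b, (3 * G x - G c) * (G x - G c) ≤ 0 := by
    rw [← integral_add_adjacent_intervals
      ((hh.mono hac).intervalIntegrable_of_Icc hc.1) ((hh.mono hcb).intervalIntegrable_of_Icc hc.2)]
    exact add_nonpos hleft hright
  rw [integral_three_mul_sub_mul_sub _ (hGc.intervalIntegrable_of_Icc hab)
    ((hGc.pow 2).intervalIntegrable_of_Icc hab)] at hnonpos
  nlinarith [mul_nonpos_of_nonneg_of_nonpos (sub_nonneg.2 hab) hnonpos,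
    sq_nonneg (2 * (∫ x in a..b, G x) - G c * (b - a))]

theorem ConcaveOn.three_mul_integral_sq_le {G : ℝ → ℝ} {a b : ℝ} (hab : a ≤ b)
    (hG : ConcaveOn ℝ (Icc a b) G) (hG0 : ∀ x ∈ Icc a b, 0 ≤ G x)
    (hi : IntervalIntegrable G volume a b)
    (hi2 : IntervalIntegrable (fun x => G x ^ 2) volume a b) :
    3 * (b - a) * ∫ x in a..b, G x ^ 2 ≤ 4 * (∫ x in a..b, G x) ^ 2 := by
  rcases hab.eq_or_lt with rfl | hlt
  · simp
  set s := Ioo 0 ((b - a) / 2)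
  have hshrink : ∀ F : ℝ → ℝ, IntervalIntegrable F volume a b →
      ContinuousWithinAt (fun ε => ∫ x in (a + ε)..(b - ε), F x) s 0 := by
    intro F hF
    have hP := continuousOn_primitive_interval' hF left_mem_uIcc
    rw [uIcc_of_le hab] at hP
    have hleft : MapsTo (fun ε => a + ε) s (Icc a b) :=
      fun ε hε => ⟨by linarith [hε.1], by linarith [hε.2]⟩
    have hright : MapsTo (fun ε => b - ε) s (Icc a b) :=
      fun ε hε => ⟨by linarith [hε.2], by linarith [hε.1]⟩
    have hcont : ContinuousWithinAt
        (fun ε => (∫ x in a..(b - ε), F x) - ∫ x in a..(a + ε), F x) s 0 :=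
      ((hP b (right_mem_Icc.2 hab)).comp_of_eq (by fun_prop) hright (sub_zero b)).sub
        ((hP a (left_mem_Icc.2 hab)).comp_of_eq (by fun_prop) hleft (add_zero a))
    refine hcont.congr (fun ε hε => ?_) (by simp)
    refine (integral_interval_sub_left (hF.mono_set ?_) (hF.mono_set ?_)).symm <;>
      rw [uIcc_of_le hab, uIcc_of_le (by linarith [hε.1, hε.2])] <;>
      exact Icc_subset_Icc le_rfl (by linarith [hε.1, hε.2])
  have hinner : ∀ ε ∈ s, 3 * ((b - ε) - (a + ε)) * (∫ x in (a + ε)..(b - ε), G x ^ 2) ≤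
      4 * (∫ x in (a + ε)..(b - ε), G x) ^ 2 := by
    intro ε hε
    have hsub : Icc (a + ε) (b - ε) ⊆ interior (Icc a b) := by
      rw [interior_Icc]
      exact Icc_subset_Ioo (by linarith [hε.1]) (by linarith [hε.1])
    exact three_mul_integral_sq_le_of_continuousOn (by linarith [hε.2])
      (hG.subset (hsub.trans interior_subset) (convex_Icc _ _))
      (hG.continuousOn_interior.mono hsub)
      (hG0 _ (interior_subset (hsub (left_mem_Icc.2 (by linarith [hε.2])))))
      (hG0 _ (interior_subset (hsub (right_mem_Icc.2 (by linarith [hε.2])))))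
  have h0 : (0 : ℝ) ∈ closure s := by
    rw [closure_Ioo (by linarith)]
    exact ⟨le_rfl, by linarith⟩
  have := ContinuousWithinAt.closure_le h0 (by have := hshrink _ hi2; fun_prop)
    (by have := hshrink _ hi; fun_prop) hinner
  simpa using this

/-- For every nonnegative concave `G : [0,1] → ℝ` with `∫_0^1 G = 1`, one has
`∫_0^1 G² ≤ 4/3`, the value attained by `G(x) = 2x`. -/
theorem stmt13 (G : ℝ → ℝ) (hconc : ConcaveOn ℝ (Set.Icc 0 1) G)
    (hpos : ∀ x ∈ Set.Icc (0 : ℝ) 1, 0 ≤ G x)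
    (hint : ∫ x in (0 : ℝ)..1, G x = 1) :
    ∫ x in (0 : ℝ)..1, (G x) ^ 2 ≤ 4 / 3 := by
  by_cases hi2 : IntervalIntegrable (fun x => G x ^ 2) volume 0 1
  · have hi : IntervalIntegrable G volume 0 1 := by
      by_contra h
      simp [integral_undef h] at hint
    have := hconc.three_mul_integral_sq_le zero_le_one hpos hi hi2
    rw [hint] at this
    linarith
  · rw [integral_undef hi2]
    norm_num
end

section
/- For s ∈ [0,1], let M_s : [0,1] → ℝ be the unit mountain function with apex at (s,2): M_s(x) = 2x/s for x ∈ [0,s] and M_s(x) = 2(1−x)/(1−s) for x ∈ [s,1] (with M_0(x) = 2(1−x) and M_1(x) = 2x). Then every piecewise-affine concave function G : [0,1] → [0,∞) with ∫_0^1 G(x) dx = 1 can be written as a finite convex combination of unit mountains: there exist m ≥ 1, distinct points s_1, …, s_m ∈ [0,1], and reals λ_1, …, λ_m > 0 with Σ_i λ_i = 1, such that G(x) = Σ_{i=1}^m λ_i·M_{s_i}(x) for all x ∈ [0,1]. -/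
/-!
A concave piecewise-affine `G` on `[0,1]` equals `G 0 + β x - ∑ d_j (x - s_j)⁺` on `[0,1]`, with a
hinge at each interior node `s_j` whose size `d_j ≥ 0` is the drop of the slope there. Since
`s(1-s)/2 · M_s(x) = x(1-s) - (x-s)⁺`, `M_0(x) = 2(1-x)` and `M_1(x) = 2x`, this rewrites `G` as the
combination of mountains with the nonnegative weights `G(0)/2`, `G(1)/2` and `d_j s_j (1-s_j)/2`.
Each mountain has integral `1`, so the weights sum to `∫ G = 1`. Collecting the weights in a
finitely supported function on apexes merges repeated apexes, and its support drops zero weights.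
-/

open Set

/-- The unit mountain function with apex `(s, 2)`: its graph over `[0,1]` bounds the
triangle with vertices `(0,0)`, `(1,0)`, `(s,2)` (with `M_0(x) = 2(1-x)` and
`M_1(x) = 2x`). -/
noncomputable def mountainFn (s x : ℝ) : ℝ :=
  if s = 0 then 2 * (1 - x)
  else if s = 1 then 2 * x
  else if x ≤ s then 2 * x / s
  else 2 * (1 - x) / (1 - s)

section

@[simp]
lemma mountainFn_zero (x : ℝ) : mountainFn 0 x = 2 * (1 - x) := by
  simp [mountainFn]

@[simp]
lemma mountainFn_one (x : ℝ) : mountainFn 1 x = 2 * x := by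
  simp [mountainFn]

variable {s x : ℝ}

lemma mountainFn_of_le (hs : s ∈ Ioo 0 1) (hx : x ≤ s) : mountainFn s x = 2 * x / s := by
  simp [mountainFn, hs.1.ne', hs.2.ne, hx]

lemma mountainFn_of_ge (hs : s ∈ Ioo 0 1) (hx : s ≤ x) :
    mountainFn s x = 2 * (1 - x) / (1 - s) := by
  rcases hx.eq_or_lt with rfl | hx
  · have : 1 - s ≠ 0 := sub_ne_zero.2 hs.2.ne'
    rw [mountainFn_of_le hs le_rfl, mul_div_assoc, mul_div_assoc, div_self this,
      div_self hs.1.ne']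
  · simp [mountainFn, hs.1.ne', hs.2.ne, hx.not_ge]

-- Both sides equal `min (x(1-s)) (s(1-x))`.
lemma mul_mountainFn (hs : s ∈ Ioo 0 1) (x : ℝ) :
    s * (1 - s) / 2 * mountainFn s x = x * (1 - s) - max (x - s) 0 := by
  have h1s : 1 - s ≠ 0 := sub_ne_zero.2 hs.2.ne'
  rcases le_total x s with hx | hx
  · rw [mountainFn_of_le hs hx, max_eq_right (by linarith)]
    field_simp [hs.1.ne']
    ring
  · rw [mountainFn_of_ge hs hx, max_eq_left (by linarith)]
    field_simp
    ring

lemma continuous_mountainFn (hs : s ∈ Icc 0 1) : Continuous (mountainFn s) := by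
  rcases eq_or_lt_of_le hs.1 with rfl | hs0
  · rw [show mountainFn 0 = fun x => 2 * (1 - x) from funext mountainFn_zero]; fun_prop
  rcases eq_or_lt_of_le hs.2 with rfl | hs1
  · rw [show mountainFn 1 = fun x => 2 * x from funext mountainFn_one]; fun_prop
  have hs' : s * (1 - s) / 2 ≠ 0 := by have := sub_pos.2 hs1; positivity
  have : mountainFn s = fun x => (x * (1 - s) - max (x - s) 0) / (s * (1 - s) / 2) := by
    ext x
    rw [← mul_mountainFn ⟨hs0, hs1⟩, mul_div_cancel_left₀ _ hs']
  rw [this]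
  fun_prop

lemma integral_mountainFn (hs : s ∈ Icc 0 1) : ∫ x in (0 : ℝ)..1, mountainFn s x = 1 := by
  rcases eq_or_lt_of_le hs.1 with rfl | hs0
  · simp [intervalIntegral.integral_sub intervalIntegrable_const
      intervalIntegral.intervalIntegrable_id]
    norm_num
  rcases eq_or_lt_of_le hs.2 with rfl | hs1
  · simp only [mountainFn_one]
    rw [intervalIntegral.integral_const_mul, integral_id]
    norm_num
  have hint (u v : ℝ) : IntervalIntegrable (mountainFn s) MeasureTheory.volume u v :=
    (continuous_mountainFn hs).intervalIntegrable u v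
  have hleft : ∫ x in (0 : ℝ)..s, mountainFn s x = ∫ x in (0 : ℝ)..s, 2 / s * x :=
    intervalIntegral.integral_congr fun x hx => by
      rw [uIcc_of_le hs.1] at hx
      rw [mountainFn_of_le ⟨hs0, hs1⟩ hx.2]; ring
  have hright : ∫ x in s..1, mountainFn s x = ∫ x in s..1, 2 / (1 - s) * (1 - x) :=
    intervalIntegral.integral_congr fun x hx => by
      rw [uIcc_of_le hs.2] at hx
      rw [mountainFn_of_ge ⟨hs0, hs1⟩ hx.1]; ring
  rw [← intervalIntegral.integral_add_adjacent_intervals (hint 0 s) (hint s 1), hleft, hright,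
    intervalIntegral.integral_const_mul, intervalIntegral.integral_const_mul,
    intervalIntegral.integral_sub intervalIntegrable_const intervalIntegral.intervalIntegrable_id,
    integral_id, integral_id, intervalIntegral.integral_const, smul_eq_mul]
  have : 1 - s ≠ 0 := sub_ne_zero.2 hs1.ne'
  field_simp
  ring

end

lemma eq_add_slope_mul_of_affineOn {f : ℝ → ℝ} {p q c b : ℝ}
    (hf : ∀ x ∈ Icc p q, f x = c * x + b) :
    ∀ x ∈ Icc p q, f x = f p + slope f p q * (x - p) := by
  intro x hx
  rcases (hx.1.trans hx.2).eq_or_lt with rfl | hpq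
  · rw [le_antisymm hx.2 hx.1]; ring
  have hslope : slope f p q = c := by
    rw [slope_def_field, hf q ⟨hpq.le, le_rfl⟩, hf p ⟨le_rfl, hpq.le⟩]
    field_simp [sub_ne_zero.2 hpq.ne']
    ring
  rw [hslope, hf x hx, hf p ⟨le_rfl, hpq.le⟩]
  ring

open Finset in
lemma eq_sub_sum_hinge {f : ℝ → ℝ} {a c : ℕ → ℝ} (ha : Monotone a) (n : ℕ)
    (hpiece : ∀ j ≤ n, ∀ x ∈ Icc (a j) (a (j + 1)), f x = f (a j) + c j * (x - a j)) :
    ∀ x ∈ Icc (a 0) (a (n + 1)),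
      f x = f (a 0) + c 0 * (x - a 0) -
        ∑ j ∈ range n, (c j - c (j + 1)) * max (x - a (j + 1)) 0 := by
  induction n with
  | zero => simpa using hpiece 0 le_rfl
  | succ n ih =>
    have ih := ih fun j hj => hpiece j (by omega)
    intro x hx
    rcases le_total x (a (n + 1)) with hxn | hxn
    · rw [sum_range_succ, max_eq_right (by linarith), mul_zero, add_zero]
      exact ih x ⟨hx.1, hxn⟩
    have hnode := ih (a (n + 1)) ⟨ha (Nat.zero_le _), le_rfl⟩
    have hkinks : ∑ j ∈ range (n + 1), (c j - c (j + 1)) * max (x - a (j + 1)) 0 =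
        ∑ j ∈ range n, (c j - c (j + 1)) * max (a (n + 1) - a (j + 1)) 0 +
          (c 0 - c (n + 1)) * (x - a (n + 1)) := by
      have hextend : ∑ j ∈ range n, (c j - c (j + 1)) * max (a (n + 1) - a (j + 1)) 0 =
          ∑ j ∈ range (n + 1), (c j - c (j + 1)) * max (a (n + 1) - a (j + 1)) 0 := by
        simp [sum_range_succ]
      rw [hextend, ← sum_range_sub' c, sum_mul, ← sum_add_distrib]
      refine sum_congr rfl fun j hj => ?_
      have hj : a (j + 1) ≤ a (n + 1) := ha (by simp at hj; omega)
      rw [max_eq_left (by linarith), max_eq_left (by linarith)]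
      ring
    rw [hpiece (n + 1) le_rfl x ⟨hxn, hx.2⟩, hkinks, hnode]
    ring

lemma ConcaveOn.exists_eq_sub_sum_hinge {G : ℝ → ℝ} (hconc : ConcaveOn ℝ (Icc 0 1) G) {k : ℕ}
    {a : Fin (k + 1) → ℝ} (ha : StrictMono a) (ha0 : a 0 = 0) (hak : a (Fin.last k) = 1)
    (hpiece : ∀ i : Fin k, ∃ c b : ℝ, ∀ x ∈ Icc (a i.castSucc) (a i.succ), G x = c * x + b) :
    ∃ (β : ℝ) (n : ℕ) (d s : ℕ → ℝ), (∀ j ∈ Finset.range n, 0 ≤ d j ∧ s j ∈ Ioo 0 1) ∧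
      ∀ x ∈ Icc (0 : ℝ) 1, G x = G 0 + β * x - ∑ j ∈ Finset.range n, d j * max (x - s j) 0 := by
  obtain ⟨n, rfl⟩ : ∃ n, k = n + 1 := by
    refine Nat.exists_eq_succ_of_ne_zero fun hk => ?_
    subst hk
    exact zero_ne_one (ha0.symm.trans hak)
  set A : ℕ → ℝ := fun j => a ⟨min j (n + 1), by omega⟩ with hA
  have hAmono : Monotone A := fun i j hij => ha.monotone (Fin.mk_le_mk.2 (min_le_min_right _ hij))
  have hA0 : A 0 = 0 := ha0
  have hAlast : A (n + 1) = 1 := by simp only [hA, min_self]; exact hak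
  have hAmem (j : ℕ) : A j ∈ Icc 0 1 :=
    ⟨ha0 ▸ ha.monotone (Fin.zero_le _), hak ▸ ha.monotone (Fin.le_last _)⟩
  have hAnode (j : ℕ) (hj : j < n + 1) :
      A j = a (⟨j, hj⟩ : Fin (n + 1)).castSucc ∧ A (j + 1) = a (⟨j, hj⟩ : Fin (n + 1)).succ := by
    constructor <;> simp only [hA] <;> congr 1 <;> ext <;> simp <;> omega
  have hAstrict (j : ℕ) (hj : j < n + 1) : A j < A (j + 1) := by
    rw [(hAnode j hj).1, (hAnode j hj).2]
    exact ha Fin.castSucc_lt_succ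
  set c : ℕ → ℝ := fun j => slope G (A j) (A (j + 1))
  have hpieceA : ∀ j ≤ n, ∀ x ∈ Icc (A j) (A (j + 1)), G x = G (A j) + c j * (x - A j) := by
    intro j hj
    obtain ⟨cj, bj, hG⟩ := hpiece ⟨j, by omega⟩
    rw [← (hAnode j (by omega)).1, ← (hAnode j (by omega)).2] at hG
    exact eq_add_slope_mul_of_affineOn hG
  have hslope_anti (j : ℕ) (hj : j < n) : c (j + 1) ≤ c j := by
    simpa only [c, slope_def_field] using
      hconc.slope_anti_adjacent (hAmem j) (hAmem (j + 2)) (hAstrict j (by omega))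
        (hAstrict (j + 1) (by omega))
  have hkink (j : ℕ) (hj : j < n) : A (j + 1) ∈ Ioo 0 1 :=
    ⟨hA0 ▸ (hAstrict 0 (by omega)).trans_le (hAmono (by omega)),
      hAlast ▸ (hAmono (by omega : j + 1 ≤ n)).trans_lt (hAstrict n (by omega))⟩
  refine ⟨c 0, n, fun j => c j - c (j + 1), fun j => A (j + 1),
    fun j hj => ⟨sub_nonneg.2 (hslope_anti j (Finset.mem_range.1 hj)),
      hkink j (Finset.mem_range.1 hj)⟩, fun x hx => ?_⟩
  rw [← hA0, ← hAlast] at hx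
  simpa [hA0] using eq_sub_sum_hinge hAmono n hpieceA x hx

section

open Finsupp

/-- The weights, indexed by apex, of the decomposition of `f = f 0 + β x - ∑ j ∈ t, d j (x - s j)⁺`
into mountains. -/
noncomputable def mountainWeights {ι : Type*} (f : ℝ → ℝ) (t : Finset ι) (d s : ι → ℝ) :
    ℝ →₀ ℝ :=
  single 0 (f 0 / 2) + single 1 (f 1 / 2) + ∑ j ∈ t, single (s j) (d j * (s j * (1 - s j) / 2))

variable {ι : Type*} {f : ℝ → ℝ} {t : Finset ι} {d s : ι → ℝ}

lemma mountainWeights_nonneg (h0 : 0 ≤ f 0) (h1 : 0 ≤ f 1) (hd : ∀ j ∈ t, 0 ≤ d j)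
    (hs : ∀ j ∈ t, s j ∈ Icc 0 1) : 0 ≤ mountainWeights f t d s := by
  refine add_nonneg (add_nonneg ?_ ?_) (Finset.sum_nonneg fun j hj => ?_) <;> rw [single_nonneg]
  · positivity
  · positivity
  · have := (hs j hj).1
    have := sub_nonneg.2 (hs j hj).2
    have := hd j hj
    positivity

lemma support_mountainWeights_subset (hs : ∀ j ∈ t, s j ∈ Icc 0 1) :
    ↑(mountainWeights f t d s).support ⊆ Icc (0 : ℝ) 1 := by
  classical
  intro a ha
  by_contra hout
  refine mem_support_iff.1 ha ?_
  have hj : ∀ j ∈ t, s j ≠ a := fun j hj h => hout (h ▸ hs j hj)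
  have h0 : (0 : ℝ) ≠ a := fun h => hout (h ▸ ⟨le_rfl, zero_le_one⟩)
  have h1 : (1 : ℝ) ≠ a := fun h => hout (h ▸ ⟨zero_le_one, le_rfl⟩)
  simp only [mountainWeights, coe_add, Pi.add_apply, finsetSum_apply, single_apply, h0, h1,
    if_false, zero_add]
  exact Finset.sum_eq_zero fun j hj' => if_neg (hj j hj')

lemma eq_linearCombination_mountainWeights {β : ℝ} (hs : ∀ j ∈ t, s j ∈ Ioo 0 1)
    (hf : ∀ x ∈ Icc (0 : ℝ) 1, f x = f 0 + β * x - ∑ j ∈ t, d j * max (x - s j) 0) :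
    ∀ x ∈ Icc (0 : ℝ) 1,
      f x = linearCombination ℝ (fun a => mountainFn a x) (mountainWeights f t d s) := by
  have hf1 : f 1 = f 0 + β - ∑ j ∈ t, d j * (1 - s j) := by
    rw [hf 1 ⟨zero_le_one, le_rfl⟩, mul_one]
    congr 1
    refine Finset.sum_congr rfl fun j hj => ?_
    rw [max_eq_left (sub_nonneg.2 (hs j hj).2.le)]
  intro x hx
  have hkinks : ∑ j ∈ t, d j * (s j * (1 - s j) / 2) * mountainFn (s j) x =
      x * ∑ j ∈ t, d j * (1 - s j) - ∑ j ∈ t, d j * max (x - s j) 0 := by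
    rw [Finset.mul_sum, ← Finset.sum_sub_distrib]
    refine Finset.sum_congr rfl fun j hj => ?_
    rw [mul_assoc, mul_mountainFn (hs j hj)]
    ring
  simp only [mountainWeights, map_add, map_sum, linearCombination_single, smul_eq_mul,
    mountainFn_zero, mountainFn_one, hkinks]
  rw [hf x hx, hf1]
  ring

lemma integral_eq_linearCombination_one {G : ℝ → ℝ} {W : ℝ →₀ ℝ}
    (hW : ↑W.support ⊆ Icc (0 : ℝ) 1)
    (hG : ∀ x ∈ Icc (0 : ℝ) 1, G x = linearCombination ℝ (fun a => mountainFn a x) W) :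
    ∫ x in (0 : ℝ)..1, G x = linearCombination ℝ (fun _ => (1 : ℝ)) W := by
  have hsum : ∫ x in (0 : ℝ)..1, G x = ∫ x in (0 : ℝ)..1, ∑ a ∈ W.support, W a * mountainFn a x :=
    intervalIntegral.integral_congr fun x hx => by
      rw [uIcc_of_le zero_le_one] at hx
      simp [hG x hx, linearCombination_apply, Finsupp.sum]
  have hint : ∀ a ∈ W.support, IntervalIntegrable (fun x => W a * mountainFn a x)
      MeasureTheory.volume 0 1 := fun a ha =>
    ((continuous_mountainFn (hW ha)).const_mul _).intervalIntegrable _ _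
  rw [hsum, intervalIntegral.integral_finsetSum hint, linearCombination_apply, Finsupp.sum]
  refine Finset.sum_congr rfl fun a ha => ?_
  rw [intervalIntegral.integral_const_mul, integral_mountainFn (hW ha), smul_eq_mul]

lemma Finsupp.exists_injective_pos_sum_eq_linearCombination {α : Type*} (W : α →₀ ℝ)
    (hW : 0 ≤ W) :
    ∃ (m : ℕ) (s : Fin m → α) (lam : Fin m → ℝ), Function.Injective s ∧ (∀ i, s i ∈ W.support) ∧
      (∀ i, 0 < lam i) ∧ ∀ φ : α → ℝ, ∑ i, lam i * φ (s i) = linearCombination ℝ φ W := by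
  let e := W.support.equivFin.symm
  refine ⟨W.support.card, fun i => e i, fun i => W (e i), Subtype.val_injective.comp e.injective,
    fun i => (e i).2, fun i => (hW _).lt_of_ne (mem_support_iff.1 (e i).2).symm, fun φ => ?_⟩
  rw [linearCombination_apply, Finsupp.sum, ← Finset.sum_coe_sort W.support]
  exact e.sum_comp fun a => W a • φ a

end

/-- Every piecewise-affine nonnegative concave function `G` on `[0,1]` with
`∫_0^1 G = 1` is a finite convex combination of unit mountain functions with
distinct apex abscissas in `[0,1]`. -/
theorem stmt14 (G : ℝ → ℝ)
    (hconc : ConcaveOn ℝ (Set.Icc 0 1) G)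
    (hpos : ∀ x ∈ Set.Icc (0 : ℝ) 1, 0 ≤ G x)
    (hint : ∫ x in (0 : ℝ)..1, G x = 1)
    (hpw : ∃ (k : ℕ) (a : Fin (k + 1) → ℝ), StrictMono a ∧ a 0 = 0 ∧ a (Fin.last k) = 1 ∧
      ∀ i : Fin k, ∃ c b : ℝ, ∀ x ∈ Set.Icc (a i.castSucc) (a i.succ), G x = c * x + b) :
    ∃ (m : ℕ) (s : Fin m → ℝ) (lam : Fin m → ℝ),
      1 ≤ m ∧ Function.Injective s ∧ (∀ i, s i ∈ Set.Icc (0 : ℝ) 1) ∧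
      (∀ i, 0 < lam i) ∧ (∑ i, lam i = 1) ∧
      ∀ x ∈ Set.Icc (0 : ℝ) 1, G x = ∑ i, lam i * mountainFn (s i) x := by
  obtain ⟨k, a, ha, ha0, hak, hpiece⟩ := hpw
  obtain ⟨β, n, d, s, hkinks, hG⟩ := ConcaveOn.exists_eq_sub_sum_hinge hconc ha ha0 hak hpiece
  have hkinks_mem : ∀ j ∈ Finset.range n, s j ∈ Icc 0 1 :=
    fun j hj => Ioo_subset_Icc_self (hkinks j hj).2
  set W := mountainWeights G (Finset.range n) d s
  have hW_supp : ↑W.support ⊆ Icc (0 : ℝ) 1 := support_mountainWeights_subset hkinks_mem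
  have hGW := eq_linearCombination_mountainWeights (fun j hj => (hkinks j hj).2) hG
  have hW_nonneg : 0 ≤ W := mountainWeights_nonneg (hpos 0 ⟨le_rfl, zero_le_one⟩)
    (hpos 1 ⟨zero_le_one, le_rfl⟩) (fun j hj => (hkinks j hj).1) hkinks_mem
  have hW_total : Finsupp.linearCombination ℝ (fun _ => (1 : ℝ)) W = 1 :=
    (integral_eq_linearCombination_one hW_supp hGW).symm.trans hint
  obtain ⟨m, s', lam, hinj, hs'_supp, hlam, hsum⟩ :=
    W.exists_injective_pos_sum_eq_linearCombination hW_nonneg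
  have hlam_total : ∑ i, lam i = 1 := by simpa using (hsum fun _ => 1).trans hW_total
  refine ⟨m, s', lam, Nat.one_le_iff_ne_zero.2 fun hm => ?_, hinj, fun i => hW_supp (hs'_supp i),
    hlam, hlam_total, fun x hx => (hGW x hx).trans (hsum _).symm⟩
  subst hm
  simp at hlam_total
end
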